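/- arXiv:1709.04712 — 6 statements merged into one kernel-verified Lean document; each statement's English description precedes it below -/
import Mathlib

section
/- Let n ≥ 3 and 0 ≤ l < k ≤ n with k − l ≥ 2. Then for every a ∈ Γ⁺ with σ_k(a) = σ_l(a) one has m_{k,l}(a) > 2. (Equivalently, 𝒜̃_{k,l} = 𝒜_{k,l} whenever k − l ≥ 2.) -/
open Finset Filter MeasureTheory Set

noncomputable def esymm (n : ℕ) (k : ℤ) (a : Fin n → ℝ) : ℝ :=
  if 0 ≤ k then
    ∑ s ∈ Finset.powersetCard k.toNat (Finset.univ : Finset (Fin n)), ∏ i ∈ s, a i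
  else 0

noncomputable def esymmDel (n : ℕ) (k : ℤ) (i : Fin n) (a : Fin n → ℝ) : ℝ :=
  if 0 ≤ k then
    ∑ s ∈ Finset.powersetCard k.toNat ((Finset.univ : Finset (Fin n)).erase i),
      ∏ j ∈ s, a j
  else 0

noncomputable def esymmDel2 (n : ℕ) (k : ℤ) (i j : Fin n) (a : Fin n → ℝ) : ℝ :=
  if 0 ≤ k then
    ∑ s ∈ Finset.powersetCard k.toNat
        (((Finset.univ : Finset (Fin n)).erase i).erase j),
      ∏ t ∈ s, a t
  else 0

noncomputable def Xi (n : ℕ) (k : ℤ) (a x : Fin n → ℝ) : ℝ :=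
  (∑ i, esymmDel n (k - 1) i a * a i ^ 2 * x i ^ 2) /
    (esymm n k a * ∑ i, a i * x i ^ 2)

noncomputable def xiSup (n : ℕ) (k : ℤ) (a : Fin n → ℝ) : ℝ :=
  sSup {y | ∃ x : Fin n → ℝ, x ≠ 0 ∧ Xi n k a x = y}

noncomputable def xiInf (n : ℕ) (k : ℤ) (a : Fin n → ℝ) : ℝ :=
  sInf {y | ∃ x : Fin n → ℝ, x ≠ 0 ∧ Xi n k a x = y}

noncomputable def mkl (n : ℕ) (k l : ℤ) (a : Fin n → ℝ) : ℝ :=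
  ((k : ℝ) - (l : ℝ)) / (xiSup n k a - xiInf n l a)

def GammaK (n : ℕ) (k : ℤ) : Set (Fin n → ℝ) :=
  {lam | ∀ j : ℤ, 1 ≤ j → j ≤ k → 0 < esymm n j lam}

noncomputable def hessian (n : ℕ) (f : (Fin n → ℝ) → ℝ) (x : Fin n → ℝ) :
    Matrix (Fin n) (Fin n) ℝ :=
  fun i j => fderiv ℝ (fun y => fderiv ℝ f y (Pi.single j 1)) x (Pi.single i 1)

def IsViscSubsol (n : ℕ) (k l : ℤ) (Ω : Set (Fin n → ℝ)) (u : (Fin n → ℝ) → ℝ) : Prop :=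
  ∀ v : (Fin n → ℝ) → ℝ, ContDiffOn ℝ 2 v Ω →
    ∀ x₀ ∈ Ω, (∀ x ∈ Ω, u x ≤ v x) → v x₀ = u x₀ →
      ∀ hH : (hessian n v x₀).IsHermitian,
        esymm n l hH.eigenvalues ≤ esymm n k hH.eigenvalues

def IsViscSupersol (n : ℕ) (k l : ℤ) (Ω : Set (Fin n → ℝ)) (u : (Fin n → ℝ) → ℝ) : Prop :=
  ∀ v : (Fin n → ℝ) → ℝ, ContDiffOn ℝ 2 v Ω →
    (∀ x ∈ Ω, ∀ hH : (hessian n v x).IsHermitian,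
      hH.eigenvalues ∈ closure (GammaK n k)) →
    ∀ x₀ ∈ Ω, (∀ x ∈ Ω, v x ≤ u x) → v x₀ = u x₀ →
      ∀ hH : (hessian n v x₀).IsHermitian,
        esymm n k hH.eigenvalues ≤ esymm n l hH.eigenvalues

def IsViscSol (n : ℕ) (k l : ℤ) (Ω : Set (Fin n → ℝ)) (u : (Fin n → ℝ) → ℝ) : Prop :=
  IsViscSubsol n k l Ω u ∧ IsViscSupersol n k l Ω u

def SolvesODE (n : ℕ) (k l : ℤ) (a : Fin n → ℝ) (β : ℝ) (ψ : ℝ → ℝ) : Prop :=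
  ContDiffOn ℝ (⊤ : ℕ∞) ψ (Set.Ici 1) ∧ ψ 1 = β ∧
  ∀ r : ℝ, 1 < r →
    ψ r ^ k + xiSup n k a * r * ψ r ^ (k - 1) * deriv ψ r
      - ψ r ^ l - xiInf n l a * r * ψ r ^ (l - 1) * deriv ψ r = 0


section AuxEsymm

variable {n : ℕ} {a : Fin n → ℝ}

lemma esymm_pos (ha : ∀ i, 0 < a i) {k : ℤ} (hk : 0 ≤ k) (hkn : k ≤ (n : ℤ)) :
    0 < esymm n k a := by
  rw [esymm, if_pos hk]
  apply Finset.sum_pos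
  · intro s hs
    exact Finset.prod_pos fun i _ => ha i
  · refine Finset.powersetCard_nonempty.2 ?_
    simpa using (Int.toNat_le_toNat hkn).trans (by simp)

lemma esymmDel_nonneg (ha : ∀ i, 0 < a i) (k : ℤ) (i : Fin n) :
    0 ≤ esymmDel n k i a := by
  rw [esymmDel]
  split
  · exact Finset.sum_nonneg fun s hs => Finset.prod_nonneg fun j _ => (ha j).le
  · exact le_refl 0

lemma esymmDel_pos (ha : ∀ i, 0 < a i) {k : ℤ} (hk : 0 ≤ k) (hkn : k ≤ (n : ℤ) - 1)
    (i : Fin n) : 0 < esymmDel n k i a := by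
  rw [esymmDel, if_pos hk]
  apply Finset.sum_pos
  · intro s hs
    exact Finset.prod_pos fun j _ => ha j
  · refine Finset.powersetCard_nonempty.2 ?_
    rw [Finset.card_erase_of_mem (Finset.mem_univ i), Finset.card_univ, Fintype.card_fin]
    omega

lemma esymm_decomp (i : Fin n) {k : ℤ} (hk : 1 ≤ k) :
    esymm n k a = esymmDel n k i a + a i * esymmDel n (k-1) i a := by
  have hk0 : (0:ℤ) ≤ k := by omega
  have hk1 : (0:ℤ) ≤ k - 1 := by omega
  rw [esymm, esymmDel, esymmDel, if_pos hk0, if_pos hk0, if_pos hk1]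
  have htn : k.toNat = (k-1).toNat + 1 := by omega
  rw [htn]
  have hi : i ∉ (Finset.univ : Finset (Fin n)).erase i := Finset.notMem_erase i _
  have huniv : (Finset.univ : Finset (Fin n)) = insert i (Finset.univ.erase i) :=
    (Finset.insert_erase (Finset.mem_univ i)).symm
  rw [show Finset.powersetCard ((k-1).toNat + 1) (Finset.univ : Finset (Fin n))
      = Finset.powersetCard ((k-1).toNat + 1) (insert i (Finset.univ.erase i)) by rw [← huniv],
    Finset.powersetCard_succ_insert hi]
  rw [Finset.sum_union, Finset.sum_image]
  · congr 1
    rw [Finset.mul_sum]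
    apply Finset.sum_congr rfl
    intro s hs
    have his : i ∉ s := fun h =>
      (Finset.notMem_erase i _) ((Finset.mem_powersetCard.1 hs).1 h)
    rw [Finset.prod_insert his]
  · intro s hs t ht hst
    have his : i ∉ s := fun h =>
      (Finset.notMem_erase i _) ((Finset.mem_powersetCard.1 hs).1 h)
    have hit : i ∉ t := fun h =>
      (Finset.notMem_erase i _) ((Finset.mem_powersetCard.1 ht).1 h)
    have := congrArg (fun u => Finset.erase u i) hst
    simpa [Finset.erase_insert his, Finset.erase_insert hit] using this
  · rw [Finset.disjoint_left]
    intro t ht ht'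
    have hit : i ∉ t := fun h =>
      (Finset.notMem_erase i _) ((Finset.mem_powersetCard.1 ht).1 h)
    obtain ⟨s, hs, rfl⟩ := Finset.mem_image.1 ht'
    exact hit (Finset.mem_insert_self i s)

lemma filter_mem_powersetCard (i : Fin n) (m : ℕ) :
    (Finset.powersetCard (m+1) (Finset.univ : Finset (Fin n))).filter (fun t => i ∈ t)
      = (Finset.powersetCard m (Finset.univ.erase i)).image (insert i) := by
  ext t
  simp only [Finset.mem_filter, Finset.mem_powersetCard, Finset.mem_image]
  constructor
  · rintro ⟨⟨-, hcard⟩, hit⟩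
    refine ⟨t.erase i, ⟨fun j hj => ?_, ?_⟩, Finset.insert_erase hit⟩
    · simp only [Finset.mem_erase] at hj ⊢
      exact ⟨hj.1, Finset.mem_univ _⟩
    · rw [Finset.card_erase_of_mem hit, hcard]; rfl
  · rintro ⟨s, ⟨hs, hcard⟩, rfl⟩
    have his : i ∉ s := fun h => (Finset.notMem_erase i _) (hs h)
    exact ⟨⟨Finset.subset_univ _, by rw [Finset.card_insert_of_notMem his, hcard]⟩,
      Finset.mem_insert_self _ _⟩

lemma sum_mul_esymmDel {k : ℤ} (hk : 1 ≤ k) :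
    ∑ i, a i * esymmDel n (k-1) i a = (k : ℝ) * esymm n k a := by
  have hk1 : (0:ℤ) ≤ k - 1 := by omega
  have htn : k.toNat = (k-1).toNat + 1 := by omega
  set m := (k-1).toNat with hm
  rw [esymm, if_pos (by omega : (0:ℤ) ≤ k), htn]
  have key : ∀ i : Fin n, a i * esymmDel n (k-1) i a
      = ∑ t ∈ (Finset.powersetCard (m+1) (Finset.univ : Finset (Fin n))).filter
          (fun t => i ∈ t), ∏ j ∈ t, a j := by
    intro i
    rw [filter_mem_powersetCard, Finset.sum_image, esymmDel, if_pos hk1, Finset.mul_sum]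
    · apply Finset.sum_congr rfl
      intro s hs
      have his : i ∉ s := fun h =>
        (Finset.notMem_erase i _) ((Finset.mem_powersetCard.1 hs).1 h)
      rw [Finset.prod_insert his]
    · intro s hs t ht hst
      have his : i ∉ s := fun h =>
        (Finset.notMem_erase i _) ((Finset.mem_powersetCard.1 hs).1 h)
      have hit : i ∉ t := fun h =>
        (Finset.notMem_erase i _) ((Finset.mem_powersetCard.1 ht).1 h)
      have := congrArg (fun u => Finset.erase u i) hst
      simpa [Finset.erase_insert his, Finset.erase_insert hit] using this
  calc ∑ i, a i * esymmDel n (k-1) i a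
      = ∑ i, ∑ t ∈ (Finset.powersetCard (m+1) (Finset.univ : Finset (Fin n))),
          if i ∈ t then ∏ j ∈ t, a j else 0 := by
        simp_rw [key, Finset.sum_filter]
    _ = ∑ t ∈ (Finset.powersetCard (m+1) (Finset.univ : Finset (Fin n))),
          ∑ i, (if i ∈ t then ∏ j ∈ t, a j else 0) := Finset.sum_comm
    _ = (k : ℝ) * ∑ t ∈ Finset.powersetCard (m+1) (Finset.univ : Finset (Fin n)),
          ∏ j ∈ t, a j := by
        rw [Finset.mul_sum]
        apply Finset.sum_congr rfl
        intro t ht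
        rw [Finset.sum_ite_mem, Finset.univ_inter, Finset.sum_const,
          (Finset.mem_powersetCard.1 ht).2]
        have : ((m:ℝ) + 1) = (k : ℝ) := by
          have : ((m : ℤ) + 1) = k := by omega
          exact_mod_cast this
        rw [nsmul_eq_mul]
        push_cast
        rw [this]

lemma single_ne_zero' (i : Fin n) : (Pi.single i (1:ℝ) : Fin n → ℝ) ≠ 0 := by
  intro h
  have := congrFun h i
  simp at this

lemma Xi_single (k : ℤ) (i : Fin n) (hai : a i ≠ 0) :
    Xi n k a (Pi.single i 1) = esymmDel n (k-1) i a * a i / esymm n k a := by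
  rw [Xi]
  have h1 : ∑ j, esymmDel n (k-1) j a * a j ^ 2 * ((Pi.single i 1 : Fin n → ℝ) j) ^ 2
      = esymmDel n (k-1) i a * a i ^ 2 := by
    rw [Finset.sum_eq_single i]
    · simp
    · intro j _ hj
      rw [Pi.single_eq_of_ne hj]
      ring
    · simp
  have h2 : ∑ j, a j * ((Pi.single i 1 : Fin n → ℝ) j) ^ 2 = a i := by
    rw [Finset.sum_eq_single i]
    · simp
    · intro j _ hj
      rw [Pi.single_eq_of_ne hj]
      ring
    · simp
  rw [h1, h2, pow_two, ← mul_assoc, mul_div_mul_right _ _ hai]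

lemma Xi_le' (k : ℤ) (ha : ∀ i, 0 < a i) (hE : 0 < esymm n k a) {C : ℝ}
    (hC : ∀ i, esymmDel n (k-1) i a * a i ≤ C * esymm n k a)
    {x : Fin n → ℝ} (hx : x ≠ 0) : Xi n k a x ≤ C := by
  obtain ⟨i0, hi0⟩ : ∃ i, x i ≠ 0 := by
    by_contra h; push_neg at h; exact hx (funext h)
  have hS : 0 < ∑ i, a i * x i ^ 2 :=
    Finset.sum_pos' (fun i _ => by have := ha i; positivity)
      ⟨i0, Finset.mem_univ _, by have := ha i0; positivity⟩
  have hD : 0 < esymm n k a * ∑ i, a i * x i ^ 2 := mul_pos hE hS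
  rw [Xi, div_le_iff₀ hD]
  calc ∑ i, esymmDel n (k-1) i a * a i ^ 2 * x i ^ 2
      = ∑ i, (esymmDel n (k-1) i a * a i) * (a i * x i ^ 2) := by
        apply Finset.sum_congr rfl; intro i _; ring
    _ ≤ ∑ i, (C * esymm n k a) * (a i * x i ^ 2) := by
        apply Finset.sum_le_sum
        intro i _
        exact mul_le_mul_of_nonneg_right (hC i) (by have := ha i; positivity)
    _ = C * (esymm n k a * ∑ i, a i * x i ^ 2) := by
        rw [← Finset.mul_sum, mul_assoc]

lemma Xi_ge' (k : ℤ) (ha : ∀ i, 0 < a i) (hE : 0 < esymm n k a) {c : ℝ}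
    (hc : ∀ i, c * esymm n k a ≤ esymmDel n (k-1) i a * a i)
    {x : Fin n → ℝ} (hx : x ≠ 0) : c ≤ Xi n k a x := by
  obtain ⟨i0, hi0⟩ : ∃ i, x i ≠ 0 := by
    by_contra h; push_neg at h; exact hx (funext h)
  have hS : 0 < ∑ i, a i * x i ^ 2 :=
    Finset.sum_pos' (fun i _ => by have := ha i; positivity)
      ⟨i0, Finset.mem_univ _, by have := ha i0; positivity⟩
  have hD : 0 < esymm n k a * ∑ i, a i * x i ^ 2 := mul_pos hE hS
  rw [Xi, le_div_iff₀ hD]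
  calc c * (esymm n k a * ∑ i, a i * x i ^ 2)
      = ∑ i, (c * esymm n k a) * (a i * x i ^ 2) := by
        rw [← Finset.mul_sum, mul_assoc]
    _ ≤ ∑ i, (esymmDel n (k-1) i a * a i) * (a i * x i ^ 2) := by
        apply Finset.sum_le_sum
        intro i _
        exact mul_le_mul_of_nonneg_right (hc i) (by have := ha i; positivity)
    _ = ∑ i, esymmDel n (k-1) i a * a i ^ 2 * x i ^ 2 := by
        apply Finset.sum_congr rfl; intro i _; ring

end AuxEsymm

/-- **Proposition 1.1 (1).** If `k - l ≥ 2`, then every `a ∈ Γ⁺` with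
`σ_k(a) = σ_l(a)` satisfies `m_{k,l}(a) > 2`; i.e. `𝒜̃_{k,l} = 𝒜_{k,l}`. -/
theorem mkl_gt_two_of_two_le_sub
    (n : ℕ) (hn : 3 ≤ n) (k l : ℤ) (hl : 0 ≤ l) (hlk : l < k) (hkn : k ≤ (n : ℤ))
    (hkl : 2 ≤ k - l)
    (a : Fin n → ℝ) (ha : ∀ i, 0 < a i) (hσ : esymm n k a = esymm n l a) :
    2 < mkl n k l a := by
  have hn0 : 0 < n := by omega
  have i0 : Fin n := ⟨0, hn0⟩
  have hnu : (Finset.univ : Finset (Fin n)).Nonempty := ⟨i0, Finset.mem_univ _⟩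
  have hn' : (n:ℝ) ≠ 0 := by positivity
  have hk1 : (1:ℤ) ≤ k := by omega
  have hEk : 0 < esymm n k a := esymm_pos ha (by omega) hkn
  have hEl : 0 < esymm n l a := esymm_pos ha hl (by omega)
  -- membership of the single-coordinate values
  have hmemk : ∀ i : Fin n, esymmDel n (k-1) i a * a i / esymm n k a ∈
      {y | ∃ x : Fin n → ℝ, x ≠ 0 ∧ Xi n k a x = y} :=
    fun i => ⟨Pi.single i 1, single_ne_zero' i, Xi_single k i (ha i).ne'⟩
  have hmeml : ∀ i : Fin n, esymmDel n (l-1) i a * a i / esymm n l a ∈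
      {y | ∃ x : Fin n → ℝ, x ≠ 0 ∧ Xi n l a x = y} :=
    fun i => ⟨Pi.single i 1, single_ne_zero' i, Xi_single l i (ha i).ne'⟩
  -- basic bounds on the ratio values
  have hCk1 : ∀ i, esymmDel n (k-1) i a * a i ≤ 1 * esymm n k a := by
    intro i
    have hdec := esymm_decomp (a := a) i hk1
    have h0 := esymmDel_nonneg ha k i
    nlinarith
  have hc0 : ∀ i, (0:ℝ) * esymm n l a ≤ esymmDel n (l-1) i a * a i := by
    intro i
    rw [zero_mul]
    exact mul_nonneg (esymmDel_nonneg ha _ i) (ha i).le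
  -- sup/inf facts
  have hbddk : BddAbove {y | ∃ x : Fin n → ℝ, x ≠ 0 ∧ Xi n k a x = y} := by
    refine ⟨1, ?_⟩
    rintro y ⟨x, hx, rfl⟩
    simpa using Xi_le' k ha hEk hCk1 hx
  have hbddl : BddBelow {y | ∃ x : Fin n → ℝ, x ≠ 0 ∧ Xi n l a x = y} := by
    refine ⟨0, ?_⟩
    rintro y ⟨x, hx, rfl⟩
    exact Xi_ge' l ha hEl hc0 hx
  have hsup_ge : ∀ i, esymmDel n (k-1) i a * a i / esymm n k a ≤ xiSup n k a :=
    fun i => le_csSup hbddk (hmemk i)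
  have hinf_le : ∀ i, xiInf n l a ≤ esymmDel n (l-1) i a * a i / esymm n l a :=
    fun i => csInf_le hbddl (hmeml i)
  have hnel : Set.Nonempty {y | ∃ x : Fin n → ℝ, x ≠ 0 ∧ Xi n l a x = y} :=
    ⟨_, hmeml i0⟩
  have hnek : Set.Nonempty {y | ∃ x : Fin n → ℝ, x ≠ 0 ∧ Xi n k a x = y} :=
    ⟨_, hmemk i0⟩
  have hsup_le_one : xiSup n k a ≤ 1 := by
    refine csSup_le hnek ?_
    rintro y ⟨x, hx, rfl⟩
    simpa using Xi_le' k ha hEk hCk1 hx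
  have hinf_ge0 : 0 ≤ xiInf n l a := by
    refine le_csInf hnel ?_
    rintro y ⟨x, hx, rfl⟩
    exact Xi_ge' l ha hEl hc0 hx
  -- averages
  have hsumk : ∑ i, esymmDel n (k-1) i a * a i / esymm n k a = (k:ℝ) := by
    rw [← Finset.sum_div]
    rw [show ∑ i, esymmDel n (k-1) i a * a i = ∑ i, a i * esymmDel n (k-1) i a from
      Finset.sum_congr rfl fun i _ => mul_comm _ _]
    rw [sum_mul_esymmDel hk1, mul_div_assoc, div_self hEk.ne', mul_one]
  have hsuml : ∑ i, esymmDel n (l-1) i a * a i / esymm n l a = (l:ℝ) := by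
    by_cases hl1 : 1 ≤ l
    · rw [← Finset.sum_div]
      rw [show ∑ i, esymmDel n (l-1) i a * a i = ∑ i, a i * esymmDel n (l-1) i a from
        Finset.sum_congr rfl fun i _ => mul_comm _ _]
      rw [sum_mul_esymmDel hl1, mul_div_assoc, div_self hEl.ne', mul_one]
    · have hl0 : l = 0 := by omega
      subst hl0
      have h0 : ∀ i : Fin n, esymmDel n (-1 : ℤ) i a = 0 := by
        intro i
        rw [esymmDel, if_neg (by norm_num)]
      simp [zero_sub, h0]
  have hexk : ∃ i : Fin n, (k:ℝ)/n ≤ esymmDel n (k-1) i a * a i / esymm n k a := by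
    obtain ⟨i, -, hi⟩ := Finset.exists_le_of_sum_le hnu
      (show ∑ _i : Fin n, (k:ℝ)/n ≤ ∑ i, esymmDel n (k-1) i a * a i / esymm n k a by
        rw [hsumk, Finset.sum_const, Finset.card_univ, Fintype.card_fin, nsmul_eq_mul,
          mul_div_cancel₀ _ hn'])
    exact ⟨i, hi⟩
  have hexl : ∃ i : Fin n, esymmDel n (l-1) i a * a i / esymm n l a ≤ (l:ℝ)/n := by
    obtain ⟨i, -, hi⟩ := Finset.exists_le_of_sum_le hnu
      (show ∑ i, esymmDel n (l-1) i a * a i / esymm n l a ≤ ∑ _i : Fin n, (l:ℝ)/n by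
        rw [hsuml, Finset.sum_const, Finset.card_univ, Fintype.card_fin, nsmul_eq_mul,
          mul_div_cancel₀ _ hn'])
    exact ⟨i, hi⟩
  have hgap_pos : 0 < xiSup n k a - xiInf n l a := by
    obtain ⟨i, hi⟩ := hexk
    obtain ⟨j, hj⟩ := hexl
    have h1 : (k:ℝ)/n ≤ xiSup n k a := hi.trans (hsup_ge i)
    have h2 : xiInf n l a ≤ (l:ℝ)/n := (hinf_le j).trans hj
    have hlt : (l:ℝ)/n < (k:ℝ)/n := by
      have : (l:ℝ) < (k:ℝ) := by exact_mod_cast hlk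
      have hn0' : (0:ℝ) < n := by positivity
      exact div_lt_div_of_pos_right this hn0'
    linarith
  have hgap_lt : 2 * (xiSup n k a - xiInf n l a) < (k:ℝ) - (l:ℝ) := by
    rcases eq_or_lt_of_le hkl with h2 | h3
    · have hl2 : (k:ℝ) - (l:ℝ) = 2 := by
        have h' : k - l = 2 := h2.symm
        have h'' := congrArg (fun z : ℤ => (z : ℝ)) h'
        push_cast at h''
        linarith
      by_cases hkn' : k ≤ (n:ℤ) - 1
      · -- xiSup < 1
        have hlt : ∀ i : Fin n, esymmDel n (k-1) i a * a i / esymm n k a < 1 := by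
          intro i
          rw [div_lt_one hEk]
          have hdec := esymm_decomp (a := a) i hk1
          have hpos := esymmDel_pos ha (by omega : (0:ℤ) ≤ k) hkn' i
          nlinarith
        have hR1 : Finset.univ.sup' hnu
            (fun i => esymmDel n (k-1) i a * a i / esymm n k a) < 1 :=
          (Finset.sup'_lt_iff hnu).2 (fun i _ => hlt i)
        have hCR : ∀ i, esymmDel n (k-1) i a * a i ≤
            (Finset.univ.sup' hnu (fun i => esymmDel n (k-1) i a * a i / esymm n k a))
              * esymm n k a := by
          intro i
          have h : esymmDel n (k-1) i a * a i / esymm n k a ≤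
              Finset.univ.sup' hnu (fun i => esymmDel n (k-1) i a * a i / esymm n k a) :=
            Finset.le_sup' (f := fun i => esymmDel n (k-1) i a * a i / esymm n k a) (Finset.mem_univ i)
          rwa [div_le_iff₀ hEk] at h
        have hsupR : xiSup n k a ≤
            Finset.univ.sup' hnu (fun i => esymmDel n (k-1) i a * a i / esymm n k a) := by
          refine csSup_le hnek ?_
          rintro y ⟨x, hx, rfl⟩
          exact Xi_le' k ha hEk hCR hx
        linarith
      · -- k = n, so l ≥ 1 and xiInf > 0
        have hl1 : (1:ℤ) ≤ l := by omega
        have hrl_pos : ∀ i : Fin n, 0 < esymmDel n (l-1) i a * a i / esymm n l a := by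
          intro i
          exact div_pos (mul_pos (esymmDel_pos ha (by omega) (by omega) i) (ha i)) hEl
        have hI : 0 < Finset.univ.inf' hnu
            (fun i => esymmDel n (l-1) i a * a i / esymm n l a) :=
          (Finset.lt_inf'_iff hnu).2 (fun i _ => hrl_pos i)
        have hcI : ∀ i, (Finset.univ.inf' hnu
            (fun i => esymmDel n (l-1) i a * a i / esymm n l a)) * esymm n l a ≤
            esymmDel n (l-1) i a * a i := by
          intro i
          have h : Finset.univ.inf' hnu
              (fun i => esymmDel n (l-1) i a * a i / esymm n l a) ≤
              esymmDel n (l-1) i a * a i / esymm n l a :=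
            Finset.inf'_le (f := fun i => esymmDel n (l-1) i a * a i / esymm n l a) (Finset.mem_univ i)
          rwa [le_div_iff₀ hEl] at h
        have hinfI : Finset.univ.inf' hnu
            (fun i => esymmDel n (l-1) i a * a i / esymm n l a) ≤ xiInf n l a := by
          refine le_csInf hnel ?_
          rintro y ⟨x, hx, rfl⟩
          exact Xi_ge' l ha hEl hcI hx
        linarith
    · have h3' : (3:ℝ) ≤ (k:ℝ) - (l:ℝ) := by
        have h' : (3:ℤ) ≤ k - l := by omega
        exact_mod_cast h'
      linarith
  rw [mkl, lt_div_iff₀ hgap_pos]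
  linarith
end

section
/- Suppose a = (a_1,…,a_n) ∈ ℝⁿ with 0 < a_1 ≤ a_2 ≤ … ≤ a_n. Then for every 1 ≤ k ≤ n: ξ̲_k(a) = a_1 σ_{k−1;1}(a)/σ_k(a), ξ̄_k(a) = a_n σ_{k−1;n}(a)/σ_k(a), and 0 < ξ̲_k(a) ≤ k/n ≤ ξ̄_k(a) ≤ 1. -/
open Finset Filter MeasureTheory Set

namespace XiAux

variable {ι : Type*} [DecidableEq ι]

noncomputable def E (f : ι → ℝ) (m : ℕ) (u : Finset ι) : ℝ :=
  ∑ s ∈ Finset.powersetCard m u, ∏ j ∈ s, f j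

lemma E_nonneg {f : ι → ℝ} (hf : ∀ i, 0 ≤ f i) (m : ℕ) (u : Finset ι) : 0 ≤ E f m u :=
  Finset.sum_nonneg fun _ _ => Finset.prod_nonneg fun j _ => hf j

lemma E_pos {f : ι → ℝ} (hf : ∀ i, 0 < f i) {m : ℕ} {u : Finset ι} (h : m ≤ u.card) :
    0 < E f m u :=
  Finset.sum_pos (fun _ _ => Finset.prod_pos fun j _ => hf j)
    (Finset.powersetCard_nonempty.2 h)

lemma E_zero (f : ι → ℝ) (u : Finset ι) : E f 0 u = 1 := by
  simp [E]

lemma E_split (f : ι → ℝ) (m : ℕ) {u : Finset ι} {i : ι} (hi : i ∈ u) :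
    E f (m + 1) u = E f (m + 1) (u.erase i) + f i * E f m (u.erase i) := by
  have hdisj : Disjoint (Finset.powersetCard (m + 1) (u.erase i))
      ((Finset.powersetCard m (u.erase i)).image (insert i)) := by
    rw [Finset.disjoint_left]
    intro s hs hs'
    obtain ⟨t, ht, rfl⟩ := Finset.mem_image.1 hs'
    exact Finset.notMem_erase i u
      ((Finset.mem_powersetCard.1 hs).1 (Finset.mem_insert_self i t))
  have hinj : ∀ s ∈ Finset.powersetCard m (u.erase i),
      ∀ t ∈ Finset.powersetCard m (u.erase i), insert i s = insert i t → s = t := by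
    intro s hs t ht hst
    have hsi : i ∉ s := fun h => Finset.notMem_erase i u ((Finset.mem_powersetCard.1 hs).1 h)
    have hti : i ∉ t := fun h => Finset.notMem_erase i u ((Finset.mem_powersetCard.1 ht).1 h)
    have := congrArg (fun w => Finset.erase w i) hst
    simpa [Finset.erase_insert hsi, Finset.erase_insert hti] using this
  unfold E
  conv_lhs => rw [← Finset.insert_erase hi,
    Finset.powersetCard_succ_insert (Finset.notMem_erase i u) m]
  rw [Finset.sum_union hdisj, Finset.sum_image hinj, Finset.mul_sum]
  congr 1
  refine Finset.sum_congr rfl fun s hs => ?_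
  rw [Finset.prod_insert
    (fun h => Finset.notMem_erase i u ((Finset.mem_powersetCard.1 hs).1 h))]

lemma sum_identity (f : ι → ℝ) (m : ℕ) (u : Finset ι) :
    ∑ i ∈ u, f i * E f m (u.erase i) = ((m : ℝ) + 1) * E f (m + 1) u := by
  have h1 : ∀ i ∈ u, f i * E f m (u.erase i)
      = ∑ s ∈ Finset.powersetCard m (u.erase i), ∏ j ∈ insert i s, f j := by
    intro i hi
    rw [E, Finset.mul_sum]
    refine Finset.sum_congr rfl fun s hs => ?_
    rw [Finset.prod_insert
      (fun h => Finset.notMem_erase i u ((Finset.mem_powersetCard.1 hs).1 h))]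
  rw [Finset.sum_congr rfl h1, Finset.sum_sigma']
  have key : ∑ p ∈ u.sigma (fun i => Finset.powersetCard m (u.erase i)),
      ∏ j ∈ insert p.1 p.2, f j
      = ∑ p ∈ (Finset.powersetCard (m + 1) u).sigma (fun t => t), ∏ j ∈ p.1, f j := by
    refine Finset.sum_nbij' (fun p => ⟨insert p.1 p.2, p.1⟩) (fun q => ⟨q.2, q.1.erase q.2⟩)
      ?_ ?_ ?_ ?_ ?_
    · rintro ⟨i, s⟩ hp
      obtain ⟨hiu, hs⟩ := Finset.mem_sigma.1 hp
      obtain ⟨hsub, hcard⟩ := Finset.mem_powersetCard.1 hs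
      have hins : i ∉ s := fun h => Finset.notMem_erase i u (hsub h)
      refine Finset.mem_sigma.2 ⟨Finset.mem_powersetCard.2 ⟨?_, ?_⟩, Finset.mem_insert_self i s⟩
      · exact Finset.insert_subset hiu (hsub.trans (Finset.erase_subset i u))
      · rw [Finset.card_insert_of_notMem hins, hcard]
    · rintro ⟨t, i⟩ hq
      obtain ⟨ht, hit⟩ := Finset.mem_sigma.1 hq
      obtain ⟨hsub, hcard⟩ := Finset.mem_powersetCard.1 ht
      refine Finset.mem_sigma.2 ⟨hsub hit, Finset.mem_powersetCard.2 ⟨?_, ?_⟩⟩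
      · exact Finset.erase_subset_erase i hsub
      · rw [Finset.card_erase_of_mem hit, hcard]
        omega
    · rintro ⟨i, s⟩ hp
      obtain ⟨hiu, hs⟩ := Finset.mem_sigma.1 hp
      have hins : i ∉ s := fun h =>
        Finset.notMem_erase i u ((Finset.mem_powersetCard.1 hs).1 h)
      simp [Finset.erase_insert hins]
    · rintro ⟨t, i⟩ hq
      obtain ⟨_, hit⟩ := Finset.mem_sigma.1 hq
      simp [Finset.insert_erase hit]
    · rintro ⟨i, s⟩ _
      rfl
  rw [key, Finset.sum_sigma, E, Finset.mul_sum]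
  refine Finset.sum_congr rfl fun t ht => ?_
  simp only
  rw [Finset.sum_const, (Finset.mem_powersetCard.1 ht).2, nsmul_eq_mul]
  push_cast
  ring

end XiAux


/-- **Lemma 2.3, inequality (2.1).** For `0 < a_1 ≤ … ≤ a_n` and `1 ≤ k ≤ n`,
the extremal values of `Ξ_k(a,·)` are attained at the first and last entries,
and `0 < ξ̲_k(a) ≤ k/n ≤ ξ̄_k(a) ≤ 1`. -/
theorem xiInf_xiSup_formulas_and_bounds
    (n : ℕ) (hn : 0 < n) (a : Fin n → ℝ)
    (hpos : ∀ i, 0 < a i) (hmono : Monotone a)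
    (k : ℕ) (hk1 : 1 ≤ k) (hkn : k ≤ n) :
    xiInf n (k : ℤ) a
      = a ⟨0, by omega⟩ * esymmDel n ((k : ℤ) - 1) ⟨0, by omega⟩ a / esymm n (k : ℤ) a ∧
    xiSup n (k : ℤ) a
      = a ⟨n - 1, by omega⟩ * esymmDel n ((k : ℤ) - 1) ⟨n - 1, by omega⟩ a
          / esymm n (k : ℤ) a ∧
    0 < xiInf n (k : ℤ) a ∧
    xiInf n (k : ℤ) a ≤ (k : ℝ) / (n : ℝ) ∧
    (k : ℝ) / (n : ℝ) ≤ xiSup n (k : ℤ) a ∧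
    xiSup n (k : ℤ) a ≤ 1 := by

  classical
  -- basic index elements
  set i0 : Fin n := ⟨0, hn⟩ with hi0def
  set iN : Fin n := ⟨n - 1, by omega⟩ with hiNdef
  -- notation
  set K : ℝ := XiAux.E a k (Finset.univ : Finset (Fin n)) with hKdef
  set D : Fin n → ℝ := fun i => XiAux.E a (k - 1) ((Finset.univ : Finset (Fin n)).erase i)
    with hDdef
  have hcardu : (Finset.univ : Finset (Fin n)).card = n := by
    simp
  have hEk : esymm n (k : ℤ) a = K := by
    simp [esymm, XiAux.E, hKdef]
  have hED : ∀ i : Fin n, esymmDel n ((k : ℤ) - 1) i a = D i := by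
    intro i
    have h0 : (0 : ℤ) ≤ (k : ℤ) - 1 := by omega
    have h1 : ((k : ℤ) - 1).toNat = k - 1 := by omega
    simp [esymmDel, h0, h1, hDdef, XiAux.E]
    intro hk0; omega
  have hK : 0 < K := XiAux.E_pos hpos (by rw [hcardu]; omega)
  have hD : ∀ i, 0 < D i := by
    intro i
    refine XiAux.E_pos hpos ?_
    rw [Finset.card_erase_of_mem (Finset.mem_univ i), hcardu]
    omega
  -- monotonicity of i ↦ a i * D i
  have hmono2 : ∀ i j : Fin n, a i ≤ a j → a i * D i ≤ a j * D j := by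
    intro i j hij
    rcases eq_or_ne i j with rfl | hne
    · exact le_rfl
    rcases Nat.exists_eq_add_of_le hk1 with ⟨m, hm⟩
    rcases m with _ | m'
    · have h1 : k - 1 = 0 := by omega
      have hDi : D i = 1 := by rw [hDdef]; simp only [h1]; exact XiAux.E_zero a _
      have hDj : D j = 1 := by rw [hDdef]; simp only [h1]; exact XiAux.E_zero a _
      rw [hDi, hDj]; simpa using hij
    · have h1 : k - 1 = m' + 1 := by omega
      have hji : j ∈ (Finset.univ : Finset (Fin n)).erase i :=
        Finset.mem_erase.2 ⟨hne.symm, Finset.mem_univ j⟩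
      have hij' : i ∈ (Finset.univ : Finset (Fin n)).erase j :=
        Finset.mem_erase.2 ⟨hne, Finset.mem_univ i⟩
      have hDi : D i = XiAux.E a (m' + 1) (((Finset.univ : Finset (Fin n)).erase i).erase j)
          + a j * XiAux.E a m' (((Finset.univ : Finset (Fin n)).erase i).erase j) := by
        rw [hDdef]; simp only [h1]; exact XiAux.E_split a m' hji
      have hDj : D j = XiAux.E a (m' + 1) (((Finset.univ : Finset (Fin n)).erase i).erase j)
          + a i * XiAux.E a m' (((Finset.univ : Finset (Fin n)).erase i).erase j) := by
        rw [hDdef]; simp only [h1]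
        rw [Finset.erase_right_comm]
        exact XiAux.E_split a m' hij'
      have hP : 0 ≤ XiAux.E a (m' + 1) (((Finset.univ : Finset (Fin n)).erase i).erase j) :=
        XiAux.E_nonneg (fun t => (hpos t).le) _ _
      have hQ : 0 ≤ XiAux.E a m' (((Finset.univ : Finset (Fin n)).erase i).erase j) :=
        XiAux.E_nonneg (fun t => (hpos t).le) _ _
      rw [hDi, hDj]
      nlinarith
  -- sum identity
  have hsum : ∑ i, a i * D i = (k : ℝ) * K := by
    have h := XiAux.sum_identity a (k - 1) (Finset.univ : Finset (Fin n))
    have h2 : k - 1 + 1 = k := by omega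
    rw [h2] at h
    have h3 : ((k - 1 : ℕ) : ℝ) + 1 = (k : ℝ) := by
      rw [Nat.cast_sub hk1]; ring
    rw [h3] at h
    exact h
  -- a i * D i ≤ K
  have hle1 : ∀ i : Fin n, a i * D i ≤ K := by
    intro i
    have hsplit := XiAux.E_split a (k - 1) (Finset.mem_univ i)
    have h2 : k - 1 + 1 = k := by omega
    rw [h2] at hsplit
    have hP : 0 ≤ XiAux.E a k ((Finset.univ : Finset (Fin n)).erase i) :=
      XiAux.E_nonneg (fun t => (hpos t).le) _ _
    rw [hKdef]
    rw [hsplit]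
    have : a i * D i = a i * XiAux.E a (k-1) ((Finset.univ : Finset (Fin n)).erase i) := rfl
    linarith [this]
  -- order facts
  have hle_i0 : ∀ i : Fin n, a i0 ≤ a i := fun i => hmono (by
    rw [Fin.le_def]; exact Nat.zero_le _)
  have hle_iN : ∀ i : Fin n, a i ≤ a iN := fun i => hmono (by
    rw [Fin.le_def]; have := i.isLt; simp only [hiNdef]; omega)
  -- Xi formula
  have hXidef : ∀ x : Fin n → ℝ, Xi n (k : ℤ) a x
      = (∑ i, D i * a i ^ 2 * x i ^ 2) / (K * ∑ i, a i * x i ^ 2) := by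
    intro x
    unfold Xi
    simp only [hED, hEk]
  -- positivity of denominator
  have hDh : ∀ x : Fin n → ℝ, x ≠ 0 → 0 < ∑ i, a i * x i ^ 2 := by
    intro x hx
    obtain ⟨i, hi⟩ := Function.ne_iff.1 hx
    refine Finset.sum_pos' (fun j _ => mul_nonneg (hpos j).le (sq_nonneg _)) ⟨i, Finset.mem_univ i, ?_⟩
    have hxi : (0 : ℝ) < x i ^ 2 :=
      lt_of_le_of_ne (sq_nonneg _) (Ne.symm (pow_ne_zero 2 hi))
    exact mul_pos (hpos i) hxi
  -- bounds on Xi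
  have hXile : ∀ x : Fin n → ℝ, x ≠ 0 →
      a i0 * D i0 / K ≤ Xi n (k : ℤ) a x ∧ Xi n (k : ℤ) a x ≤ a iN * D iN / K := by
    intro x hx
    have hden := hDh x hx
    rw [hXidef x]
    have hup : ∑ i, D i * a i ^ 2 * x i ^ 2 ≤ (a iN * D iN) * ∑ i, a i * x i ^ 2 := by
      rw [Finset.mul_sum]
      refine Finset.sum_le_sum fun i _ => ?_
      have heq : D i * a i ^ 2 * x i ^ 2 = (a i * D i) * (a i * x i ^ 2) := by ring
      rw [heq]
      exact mul_le_mul_of_nonneg_right (hmono2 i iN (hle_iN i))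
        (mul_nonneg (hpos i).le (sq_nonneg _))
    have hlo : (a i0 * D i0) * ∑ i, a i * x i ^ 2 ≤ ∑ i, D i * a i ^ 2 * x i ^ 2 := by
      rw [Finset.mul_sum]
      refine Finset.sum_le_sum fun i _ => ?_
      have heq : D i * a i ^ 2 * x i ^ 2 = (a i * D i) * (a i * x i ^ 2) := by ring
      rw [heq]
      exact mul_le_mul_of_nonneg_right (hmono2 i0 i (hle_i0 i))
        (mul_nonneg (hpos i).le (sq_nonneg _))
    constructor
    · rw [div_le_div_iff₀ hK (mul_pos hK hden)]
      nlinarith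
    · rw [div_le_div_iff₀ (mul_pos hK hden) hK]
      nlinarith
  -- values at coordinate vectors
  have hsingle_ne : ∀ j : Fin n, (Pi.single j 1 : Fin n → ℝ) ≠ 0 := by
    intro j h
    have := congrFun h j
    simp at this
  have hsingle : ∀ j : Fin n, Xi n (k : ℤ) a (Pi.single j 1) = a j * D j / K := by
    intro j
    rw [hXidef]
    have h1 : ∑ i, D i * a i ^ 2 * (Pi.single j 1 : Fin n → ℝ) i ^ 2 = D j * a j ^ 2 := by
      rw [Finset.sum_eq_single j]
      · simp
      · intro b _ hb
        simp [Pi.single_eq_of_ne hb]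
      · intro h; exact absurd (Finset.mem_univ j) h
    have h2 : ∑ i, a i * (Pi.single j 1 : Fin n → ℝ) i ^ 2 = a j := by
      rw [Finset.sum_eq_single j]
      · simp
      · intro b _ hb
        simp [Pi.single_eq_of_ne hb]
      · intro h; exact absurd (Finset.mem_univ j) h
    rw [h1, h2, div_eq_div_iff (mul_pos hK (hpos j)).ne' hK.ne']
    ring
  -- the value set
  set S : Set ℝ := {y | ∃ x : Fin n → ℝ, x ≠ 0 ∧ Xi n (k : ℤ) a x = y} with hSdef
  have hGreat : IsGreatest S (a iN * D iN / K) :=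
    ⟨⟨Pi.single iN 1, hsingle_ne iN, hsingle iN⟩,
     by rintro y ⟨x, hx, rfl⟩; exact (hXile x hx).2⟩
  have hLeast : IsLeast S (a i0 * D i0 / K) :=
    ⟨⟨Pi.single i0 1, hsingle_ne i0, hsingle i0⟩,
     by rintro y ⟨x, hx, rfl⟩; exact (hXile x hx).1⟩
  have hsup : xiSup n (k : ℤ) a = a iN * D iN / K := by
    rw [xiSup]; exact hGreat.csSup_eq
  have hinf : xiInf n (k : ℤ) a = a i0 * D i0 / K := by
    rw [xiInf]; exact hLeast.csInf_eq
  have hnR : (0 : ℝ) < (n : ℝ) := by exact_mod_cast hn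
  -- k/n bounds
  have hsum_lo : (n : ℝ) * (a i0 * D i0) ≤ (k : ℝ) * K := by
    have := Finset.card_nsmul_le_sum (Finset.univ : Finset (Fin n))
      (fun i => a i * D i) (a i0 * D i0)
      (fun i _ => hmono2 i0 i (hle_i0 i))
    rw [hcardu, nsmul_eq_mul] at this
    linarith [hsum ▸ this]
  have hsum_hi : (k : ℝ) * K ≤ (n : ℝ) * (a iN * D iN) := by
    have := Finset.sum_le_card_nsmul (Finset.univ : Finset (Fin n))
      (fun i => a i * D i) (a iN * D iN)
      (fun i _ => hmono2 i iN (hle_iN i))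
    rw [hcardu, nsmul_eq_mul] at this
    linarith [hsum ▸ this]
  refine ⟨?_, ?_, ?_, ?_, ?_, ?_⟩
  · rw [hinf, hED, hEk]
  · rw [hsup, hED, hEk]
  · rw [hinf]
    exact div_pos (mul_pos (hpos i0) (hD i0)) hK
  · rw [hinf, div_le_div_iff₀ hK hnR]
    nlinarith
  · rw [hsup, div_le_div_iff₀ hnR hK]
    nlinarith
  · rw [hsup, div_le_one hK]
    exact hle1 iN
end

section
/- Suppose a = (a_1,…,a_n) ∈ ℝⁿ with 0 < a_1 ≤ a_2 ≤ … ≤ a_n and n ≥ 2. Then 0 = ξ̄_0(a) < 1/n ≤ a_n/σ_1(a) = ξ̄_1(a) ≤ ξ̄_2(a) ≤ … ≤ ξ̄_{n−1}(a) < ξ̄_n(a) = 1; that is, k ↦ ξ̄_k(a) is nondecreasing on 1 ≤ k ≤ n, with ξ̄_1(a) = a_n/σ_1(a) ≥ 1/n, ξ̄_{n−1}(a) < 1 and ξ̄_n(a) = 1. -/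
open Finset Filter MeasureTheory Set

section XiAux

noncomputable def E {n : ℕ} (a : Fin n → ℝ) (s : Finset (Fin n)) (k : ℕ) : ℝ :=
  ∑ t ∈ s.powersetCard k, ∏ i ∈ t, a i

variable {n : ℕ} {a : Fin n → ℝ}

lemma E_zero (s : Finset (Fin n)) : E a s 0 = 1 := by
  simp [E, Finset.powersetCard_zero]

lemma E_one (s : Finset (Fin n)) : E a s 1 = ∑ i ∈ s, a i := by
  simp [E, Finset.powersetCard_one, Finset.sum_map]

lemma E_nonneg (h : ∀ i, 0 ≤ a i) (s : Finset (Fin n)) (k : ℕ) : 0 ≤ E a s k :=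
  Finset.sum_nonneg fun t _ => Finset.prod_nonneg fun i _ => h i

lemma E_pos (h : ∀ i, 0 < a i) (s : Finset (Fin n)) {k : ℕ} (hk : k ≤ s.card) :
    0 < E a s k :=
  Finset.sum_pos (fun t _ => Finset.prod_pos fun i _ => h i)
    (Finset.powersetCard_nonempty.2 hk)

lemma E_eq_zero (s : Finset (Fin n)) {k : ℕ} (hk : s.card < k) : E a s k = 0 := by
  simp [E, Finset.powersetCard_eq_empty.2 hk]

lemma E_insert {s : Finset (Fin n)} {i : Fin n} (hi : i ∉ s) (k : ℕ) :
    E a (insert i s) (k + 1) = E a s (k + 1) + a i * E a s k := by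
  have hdisj : Disjoint (s.powersetCard (k + 1))
      ((s.powersetCard k).image (insert i)) := by
    rw [Finset.disjoint_left]
    intro t ht ht'
    have hts : t ⊆ s := (Finset.mem_powersetCard.1 ht).1
    obtain ⟨u, hu, rfl⟩ := Finset.mem_image.1 ht'
    exact hi (hts (Finset.mem_insert_self i u))
  rw [E, Finset.powersetCard_succ_insert hi, Finset.sum_union hdisj]
  congr 1
  rw [Finset.sum_image, E, Finset.mul_sum]
  · apply Finset.sum_congr rfl
    intro t ht
    have hit : i ∉ t := fun h =>
      hi ((Finset.mem_powersetCard.1 ht).1 h)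
    rw [Finset.prod_insert hit]
  · intro t ht u hu huv
    have hit : i ∉ t := fun h => hi ((Finset.mem_powersetCard.1 ht).1 h)
    have hiu : i ∉ u := fun h => hi ((Finset.mem_powersetCard.1 hu).1 h)
    have := congrArg (Finset.erase · i) huv
    simpa [Finset.erase_insert, hit, hiu] using this

lemma E_erase {s : Finset (Fin n)} {i : Fin n} (hi : i ∈ s) (k : ℕ) :
    E a s (k + 1) = E a (s.erase i) (k + 1) + a i * E a (s.erase i) k := by
  conv_lhs => rw [← Finset.insert_erase hi]
  exact E_insert (Finset.notMem_erase i s) k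

lemma E_zero_succ (h : ∀ i, 0 ≤ a i) {s : Finset (Fin n)} {k : ℕ}
    (hk : E a s k = 0) : E a s (k + 1) = 0 := by
  have hterm : ∀ t ∈ s.powersetCard k, (∏ j ∈ t, a j) = 0 := by
    rw [E] at hk
    exact (Finset.sum_eq_zero_iff_of_nonneg
      (fun t _ => Finset.prod_nonneg fun j _ => h j)).1 hk
  apply Finset.sum_eq_zero
  intro t ht
  obtain ⟨hts, hcard⟩ := Finset.mem_powersetCard.1 ht
  have hne : t.Nonempty := Finset.card_pos.1 (by omega)
  obtain ⟨j, hj⟩ := hne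
  have : t.erase j ∈ s.powersetCard k := Finset.mem_powersetCard.2
    ⟨(Finset.erase_subset j t).trans hts, by rw [Finset.card_erase_of_mem hj]; omega⟩
  rw [← Finset.insert_erase hj, Finset.prod_insert (Finset.notMem_erase j t),
    hterm _ this, mul_zero]

lemma E_newton (h : ∀ i, 0 ≤ a i) (s : Finset (Fin n)) :
    ∀ k : ℕ, E a s k * E a s (k + 2) ≤ E a s (k + 1) * E a s (k + 1) := by
  induction s using Finset.induction_on with
  | empty =>
    intro k
    rw [E_eq_zero (k := k + 2) _ (by simp), mul_zero]
    exact mul_self_nonneg _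
  | @insert i s hi IH =>
    have cross : ∀ m : ℕ, E a s m * E a s (m + 3) ≤ E a s (m + 1) * E a s (m + 2) := by
      intro m
      rcases eq_or_lt_of_le (E_nonneg h s (m + 1)) with hq | hq
      · have h2 : E a s (m + 2) = 0 := E_zero_succ h hq.symm
        have h3 : E a s (m + 3) = 0 := E_zero_succ h h2
        rw [h3, mul_zero, ← hq, zero_mul]
      rcases eq_or_lt_of_le (E_nonneg h s (m + 2)) with hr | hr
      · have h3 : E a s (m + 3) = 0 := E_zero_succ h hr.symm
        rw [h3, mul_zero, ← hr, mul_zero]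
      have h1 := IH m
      have h2 := IH (m + 1)
      have := mul_le_mul h1 h2 (mul_nonneg (E_nonneg h s _) (E_nonneg h s _))
        (mul_nonneg (E_nonneg h s _) (E_nonneg h s _))
      nlinarith [E_nonneg h s m, E_nonneg h s (m + 3)]
    intro k
    match k with
    | 0 =>
      rw [E_zero, E_insert hi, E_insert hi, E_zero, one_mul]
      have h0 := IH 0
      rw [E_zero, one_mul] at h0
      nlinarith [E_nonneg h s 1, h i, E_nonneg h s 0]
    | (m + 1) =>
      have e1 : E a (insert i s) (m + 1) = E a s (m + 1) + a i * E a s m := E_insert hi m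
      have e2 : E a (insert i s) (m + 2) = E a s (m + 2) + a i * E a s (m + 1) :=
        E_insert hi (m + 1)
      have e3 : E a (insert i s) (m + 3) = E a s (m + 3) + a i * E a s (m + 2) :=
        E_insert hi (m + 2)
      rw [show m + 1 + 2 = m + 3 by ring, show m + 1 + 1 = m + 2 by ring, e1, e2, e3]
      have h1 := IH m
      have h2 := IH (m + 1)
      have h3 := cross m
      nlinarith [h i, sq_nonneg (a i)]

end XiAux

section XiAuxMore
variable {n : ℕ} {a : Fin n → ℝ}

lemma esymm_eq (k : ℤ) (hk : 0 ≤ k) : esymm n k a = E a Finset.univ k.toNat :=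
  if_pos hk

lemma esymmDel_eq (k : ℤ) (hk : 0 ≤ k) (i : Fin n) :
    esymmDel n k i a = E a (Finset.univ.erase i) k.toNat :=
  if_pos hk

lemma sum_sq_pos (hpos : ∀ i, 0 < a i) {x : Fin n → ℝ} (hx : x ≠ 0) :
    0 < ∑ i, a i * x i ^ 2 := by
  obtain ⟨i, hi⟩ := Function.ne_iff.1 hx
  exact Finset.sum_pos' (fun j _ => mul_nonneg (hpos j).le (sq_nonneg _))
    ⟨i, Finset.mem_univ i, mul_pos (hpos i) (sq_pos_of_ne_zero hi)⟩

lemma xiSup_isGreatest (hn : 0 < n) (k : ℤ) (hk1 : 1 ≤ k) (hkn : k ≤ (n : ℤ))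
    (hpos : ∀ i, 0 < a i) :
    IsGreatest {y | ∃ x : Fin n → ℝ, x ≠ 0 ∧ Xi n k a x = y}
      (Finset.univ.sup' (Finset.univ_nonempty_iff.2 ⟨⟨0, hn⟩⟩)
        (fun i => esymmDel n (k - 1) i a * a i / esymm n k a)) := by
  haveI : Nonempty (Fin n) := ⟨⟨0, hn⟩⟩
  have hne : (Finset.univ : Finset (Fin n)).Nonempty := Finset.univ_nonempty
  set c : Fin n → ℝ := fun i => esymmDel n (k - 1) i a * a i / esymm n k a with hc
  have hS : 0 < esymm n k a := by
    rw [esymm_eq k (by omega)]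
    exact E_pos hpos _ (by simpa using by omega)
  constructor
  · obtain ⟨i₀, -, hi₀⟩ := Finset.exists_mem_eq_sup' (Finset.univ_nonempty_iff.2 ⟨⟨0, hn⟩⟩) c
    refine ⟨Pi.single i₀ 1, ?_, ?_⟩
    · intro h
      have := congrFun h i₀
      simp [Pi.single_eq_same] at this
    · rw [hi₀, Xi]
      have hnum : (∑ i, esymmDel n (k - 1) i a * a i ^ 2 * ((Pi.single i₀ 1 : Fin n → ℝ) i) ^ 2)
          = esymmDel n (k - 1) i₀ a * a i₀ ^ 2 := by
        rw [Fintype.sum_eq_single i₀ (fun b hb => by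
          simp [Pi.single_eq_of_ne hb])]
        simp [Pi.single_eq_same]
      have hden : (∑ i, a i * ((Pi.single i₀ 1 : Fin n → ℝ) i) ^ 2) = a i₀ := by
        rw [Fintype.sum_eq_single i₀ (fun b hb => by
          simp [Pi.single_eq_of_ne hb])]
        simp [Pi.single_eq_same]
      rw [hnum, hden, hc]
      have ha0 : a i₀ ≠ 0 := (hpos i₀).ne'
      field_simp
  · rintro y ⟨x, hx, rfl⟩
    set M := Finset.univ.sup' (Finset.univ_nonempty_iff.2 ⟨⟨0, hn⟩⟩) c with hM
    have hsum : 0 < ∑ i, a i * x i ^ 2 := sum_sq_pos hpos hx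
    have hden : 0 < esymm n k a * ∑ i, a i * x i ^ 2 := mul_pos hS hsum
    rw [Xi, div_le_iff₀ hden]
    have hterm : ∀ i : Fin n, esymmDel n (k - 1) i a * a i ^ 2 * x i ^ 2
        ≤ M * (esymm n k a * (a i * x i ^ 2)) := by
      intro i
      have hci : c i ≤ M := Finset.le_sup' c (Finset.mem_univ i)
      have : esymmDel n (k - 1) i a * a i ≤ M * esymm n k a := by
        rw [hc] at hci
        calc esymmDel n (k - 1) i a * a i
            = (esymmDel n (k - 1) i a * a i / esymm n k a) * esymm n k a := by
              field_simp
          _ ≤ M * esymm n k a := mul_le_mul_of_nonneg_right hci hS.le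
      calc esymmDel n (k - 1) i a * a i ^ 2 * x i ^ 2
          = (esymmDel n (k - 1) i a * a i) * (a i * x i ^ 2) := by ring
        _ ≤ (M * esymm n k a) * (a i * x i ^ 2) :=
            mul_le_mul_of_nonneg_right this (mul_nonneg (hpos i).le (sq_nonneg _))
        _ = M * (esymm n k a * (a i * x i ^ 2)) := by ring
    calc (∑ i, esymmDel n (k - 1) i a * a i ^ 2 * x i ^ 2)
        ≤ ∑ i, M * (esymm n k a * (a i * x i ^ 2)) := Finset.sum_le_sum fun i _ => hterm i
      _ = M * (esymm n k a * ∑ i, a i * x i ^ 2) := by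
          rw [← Finset.mul_sum, ← Finset.mul_sum]

lemma xiSup_eq_sup' (hn : 0 < n) (k : ℤ) (hk1 : 1 ≤ k) (hkn : k ≤ (n : ℤ))
    (hpos : ∀ i, 0 < a i) :
    xiSup n k a = Finset.univ.sup' (Finset.univ_nonempty_iff.2 ⟨⟨0, hn⟩⟩)
      (fun i => esymmDel n (k - 1) i a * a i / esymm n k a) :=
  (xiSup_isGreatest hn k hk1 hkn hpos).csSup_eq

end XiAuxMore

/-- **Lemma 2.3, inequality (2.2).** Monotonicity in `k` of `ξ̄_k(a)` for
`0 < a_1 ≤ … ≤ a_n`: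
`0 = ξ̄_0(a) < 1/n ≤ a_n/σ_1(a) = ξ̄_1(a) ≤ … ≤ ξ̄_{n-1}(a) < ξ̄_n(a) = 1`. -/
theorem xiSup_monotone_chain
    (n : ℕ) (hn : 2 ≤ n) (a : Fin n → ℝ)
    (hpos : ∀ i, 0 < a i) (hmono : Monotone a) :
    xiSup n 0 a = 0 ∧
    (1 : ℝ) / (n : ℝ) ≤ xiSup n 1 a ∧
    xiSup n 1 a = a ⟨n - 1, by omega⟩ / esymm n 1 a ∧
    (∀ j : ℤ, 1 ≤ j → j ≤ (n : ℤ) - 1 → xiSup n j a ≤ xiSup n (j + 1) a) ∧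
    xiSup n ((n : ℤ) - 1) a < 1 ∧
    xiSup n (n : ℤ) a = 1 := by
  have hn0 : 0 < n := by omega
  haveI : Nonempty (Fin n) := ⟨⟨0, hn0⟩⟩
  have hune : (Finset.univ : Finset (Fin n)).Nonempty := Finset.univ_nonempty
  have hca : ∀ i : Fin n, (Finset.univ.erase i).card = n - 1 := fun i => by
    rw [Finset.card_erase_of_mem (Finset.mem_univ i)]; simp
  have hnn : ∀ i, 0 ≤ a i := fun i => (hpos i).le
  set imax : Fin n := ⟨n - 1, by omega⟩ with himax
  -- the value of xiSup at 1
  have hS1 : esymm n 1 a = ∑ i, a i := by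
    rw [esymm_eq 1 (by omega)]
    simpa using E_one (a := a) Finset.univ
  have hS1pos : 0 < esymm n 1 a := by
    rw [hS1]; exact Finset.sum_pos (fun i _ => hpos i) hune
  have h1 : xiSup n 1 a = a imax / esymm n 1 a := by
    rw [xiSup_eq_sup' hn0 1 le_rfl (by exact_mod_cast hn0) hpos]
    have hc : ∀ i : Fin n, esymmDel n (1 - 1) i a * a i / esymm n 1 a
        = a i / esymm n 1 a := by
      intro i
      rw [esymmDel_eq (1 - 1) (by omega) i]
      norm_num [E_zero]
    apply le_antisymm
    · apply Finset.sup'_le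
      intro i _
      rw [hc i]
      exact (div_le_div_iff_of_pos_right hS1pos).2 (hmono (by simp [himax, Fin.le_def]; omega))
    · have := Finset.le_sup' (f := fun i => esymmDel n (1 - 1) i a * a i / esymm n 1 a)
        (Finset.mem_univ imax)
      rw [hc imax] at this
      exact this
  refine ⟨?_, ?_, ?_, ?_, ?_, ?_⟩
  · -- k = 0
    have hset : {y | ∃ x : Fin n → ℝ, x ≠ 0 ∧ Xi n 0 a x = y} = {0} := by
      ext y
      simp only [Set.mem_setOf_eq, Set.mem_singleton_iff]
      constructor
      · rintro ⟨x, hx, rfl⟩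
        have hz : ∀ i : Fin n, esymmDel n (0 - 1) i a = 0 := fun i => if_neg (by omega)
        rw [Xi]
        convert zero_div _ using 2
        exact Finset.sum_eq_zero fun i _ => by rw [hz i, zero_mul, zero_mul]
      · rintro rfl
        refine ⟨Pi.single ⟨0, hn0⟩ 1, ?_, ?_⟩
        · intro h
          have := congrFun h ⟨0, hn0⟩
          simp [Pi.single_eq_same] at this
        · have hz : ∀ i : Fin n, esymmDel n (0 - 1) i a = 0 := fun i => if_neg (by omega)
          rw [Xi]
          convert zero_div _ using 2
          exact Finset.sum_eq_zero fun i _ => by rw [hz i, zero_mul, zero_mul]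
    rw [xiSup, hset, csSup_singleton]
  · -- 1/n ≤ xiSup n 1 a
    rw [h1, hS1, div_le_div_iff₀ (by positivity) (by
      exact Finset.sum_pos (fun i _ => hpos i) hune)]
    have hb : ∑ i, a i ≤ ∑ _i : Fin n, a imax := by
      apply Finset.sum_le_sum
      intro i _
      exact hmono (by simp [himax, Fin.le_def]; omega)
    simp only [Finset.sum_const, Finset.card_univ, Fintype.card_fin, nsmul_eq_mul] at hb
    linarith
  · exact h1
  · -- monotone step
    intro j hj1 hjn
    set m : ℕ := (j - 1).toNat with hm
    have hjt : j.toNat = m + 1 := by omega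
    have hj1t : (j + 1).toNat = m + 2 := by omega
    have hmn : m + 2 ≤ n := by omega
    rw [xiSup_eq_sup' hn0 j hj1 (by omega) hpos,
      xiSup_eq_sup' hn0 (j + 1) (by omega) (by omega) hpos]
    apply Finset.sup'_le
    intro i _
    refine le_trans ?_ (Finset.le_sup'
      (f := fun i => esymmDel n (j + 1 - 1) i a * a i / esymm n (j + 1) a)
      (Finset.mem_univ i))
    have hcs : (Finset.univ.erase i).card = n - 1 := hca i
    set s := Finset.univ.erase i with hs
    have eD1 : esymmDel n (j - 1) i a = E a s m := by
      rw [esymmDel_eq (j - 1) (by omega) i, hm]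
    have eD2 : esymmDel n (j + 1 - 1) i a = E a s (m + 1) := by
      rw [esymmDel_eq (j + 1 - 1) (by omega) i]
      congr 1
      omega
    have eS1 : esymm n j a = E a s (m + 1) + a i * E a s m := by
      rw [esymm_eq j (by omega), hjt]
      exact E_erase (Finset.mem_univ i) m
    have eS2 : esymm n (j + 1) a = E a s (m + 2) + a i * E a s (m + 1) := by
      rw [esymm_eq (j + 1) (by omega), hj1t]
      exact E_erase (Finset.mem_univ i) (m + 1)
    have hS1p : 0 < esymm n j a := by
      rw [esymm_eq j (by omega)]
      exact E_pos hpos _ (by simp only [Finset.card_univ, Fintype.card_fin]; omega)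
    have hS2p : 0 < esymm n (j + 1) a := by
      rw [esymm_eq (j + 1) (by omega)]
      exact E_pos hpos _ (by simp only [Finset.card_univ, Fintype.card_fin]; omega)
    rw [div_le_div_iff₀ hS1p hS2p, eD1, eD2, eS1, eS2]
    have hnewton := E_newton hnn s m
    nlinarith [E_nonneg hnn s m, E_nonneg hnn s (m + 1), E_nonneg hnn s (m + 2),
      hpos i, hnn i]
  · -- xiSup (n-1) < 1
    rw [xiSup_eq_sup' hn0 ((n : ℤ) - 1) (by omega) (by omega) hpos]
    rw [Finset.sup'_lt_iff]
    intro i _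
    set s := Finset.univ.erase i with hs
    have hcs : s.card = n - 1 := hca i
    have eD : esymmDel n ((n : ℤ) - 1 - 1) i a = E a s (n - 2) := by
      rw [esymmDel_eq _ (by omega) i]
      congr 1
      omega
    have eS : esymm n ((n : ℤ) - 1) a = E a s (n - 1) + a i * E a s (n - 2) := by
      rw [esymm_eq _ (by omega)]
      have : ((n : ℤ) - 1).toNat = (n - 2) + 1 := by omega
      rw [this]
      have h2 := E_erase (a := a) (Finset.mem_univ i) (n - 2)
      rw [show n - 2 + 1 = n - 1 from by omega] at h2 ⊢
      exact h2
    have hSp : 0 < esymm n ((n : ℤ) - 1) a := by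
      rw [esymm_eq _ (by omega)]
      exact E_pos hpos _ (by simp only [Finset.card_univ, Fintype.card_fin]; omega)
    rw [div_lt_one hSp, eD, eS]
    have hEp : 0 < E a s (n - 1) := E_pos hpos _ (by omega)
    nlinarith [E_nonneg hnn s (n - 2), hpos i]
  · -- xiSup n = 1
    rw [xiSup_eq_sup' hn0 (n : ℤ) (by omega) le_rfl hpos]
    have hc : ∀ i : Fin n, esymmDel n ((n : ℤ) - 1) i a * a i / esymm n (n : ℤ) a = 1 := by
      intro i
      set s := Finset.univ.erase i with hs
      have hcs : s.card = n - 1 := hca i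
      have eD : esymmDel n ((n : ℤ) - 1) i a = E a s (n - 1) := by
        rw [esymmDel_eq _ (by omega) i]
        congr 1
        omega
      have eS : esymm n (n : ℤ) a = a i * E a s (n - 1) := by
        rw [esymm_eq _ (by omega)]
        have ht : ((n : ℤ)).toNat = (n - 1) + 1 := by omega
        rw [ht, E_erase (Finset.mem_univ i) (n - 1),
          E_eq_zero s (k := (n - 1) + 1) (by omega), zero_add]
      have hEp : 0 < E a s (n - 1) := E_pos hpos _ (by omega)
      rw [eD, eS, mul_comm (a i), div_self (mul_pos hEp (hpos i)).ne']
    rw [show (fun i => esymmDel n ((n : ℤ) - 1) i a * a i / esymm n (n : ℤ) a)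
        = fun _ : Fin n => (1 : ℝ) from funext hc]
    exact Finset.sup'_const _ _
end

section
/- Suppose a = (a_1,…,a_n) ∈ ℝⁿ with 0 < a_1 ≤ a_2 ≤ … ≤ a_n and n ≥ 2. Then 0 = ξ̲_0(a) < a_1/σ_1(a) = ξ̲_1(a) ≤ ξ̲_2(a) ≤ … ≤ ξ̲_{n−1}(a) < ξ̲_n(a) = 1; that is, k ↦ ξ̲_k(a) is nondecreasing on 1 ≤ k ≤ n, with ξ̲_1(a) = a_1/σ_1(a) > 0, ξ̲_{n−1}(a) < 1 and ξ̲_n(a) = 1. -/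
open Finset Filter MeasureTheory Set

open Finset

section ESdef
variable {ι : Type*} [DecidableEq ι]

noncomputable def ES (a : ι → ℝ) (s : Finset ι) (k : ℤ) : ℝ :=
  if 0 ≤ k then ∑ t ∈ s.powersetCard k.toNat, ∏ i ∈ t, a i else 0

lemma ES_neg (a : ι → ℝ) (s : Finset ι) {k : ℤ} (hk : k < 0) : ES a s k = 0 :=
  if_neg (not_le.2 hk)

lemma ES_zero (a : ι → ℝ) (s : Finset ι) : ES a s 0 = 1 := by
  simp [ES]

lemma ES_one (a : ι → ℝ) (s : Finset ι) : ES a s 1 = ∑ i ∈ s, a i := by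
  rw [ES, if_pos (by norm_num)]
  norm_num [Finset.powersetCard_one, Finset.sum_map]

lemma ES_insert (a : ι → ℝ) {x : ι} {t : Finset ι} (hx : x ∉ t) (k : ℤ) :
    ES a (insert x t) k = ES a t k + a x * ES a t (k - 1) := by
  rcases lt_trichotomy k 0 with h | h | h
  · rw [ES_neg _ _ h, ES_neg _ _ h, ES_neg _ _ (by omega), mul_zero, add_zero]
  · subst h
    rw [ES_zero, ES_zero, ES_neg _ _ (by omega), mul_zero, add_zero]
  · obtain ⟨m, rfl⟩ : ∃ m : ℕ, k = (m : ℤ) + 1 := ⟨(k - 1).toNat, by omega⟩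
    have h1 : ((m : ℤ) + 1).toNat = m + 1 := by omega
    have h2 : ((m : ℤ) + 1 - 1).toNat = m := by omega
    rw [ES, ES, ES, if_pos (by omega), if_pos (by omega), if_pos (by omega), h1, h2,
      Finset.powersetCard_succ_insert hx]
    rw [Finset.sum_union]
    · congr 1
      rw [Finset.sum_image, Finset.mul_sum]
      · refine Finset.sum_congr rfl fun u hu => ?_
        exact Finset.prod_insert fun hxu => hx ((Finset.mem_powersetCard.1 hu).1 hxu)
      · intro u hu v hv huv
        have hxu : x ∉ u := fun h => hx ((Finset.mem_powersetCard.1 hu).1 h)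
        have hxv : x ∉ v := fun h => hx ((Finset.mem_powersetCard.1 hv).1 h)
        rw [← Finset.erase_insert hxu, ← Finset.erase_insert hxv, huv]
    · rw [Finset.disjoint_left]
      intro u hu hu'
      obtain ⟨v, hv, rfl⟩ := Finset.mem_image.1 hu'
      exact hx ((Finset.mem_powersetCard.1 hu).1 (Finset.mem_insert_self x v))

lemma ES_nonneg {a : ι → ℝ} {s : Finset ι} (ha : ∀ i ∈ s, 0 ≤ a i) (k : ℤ) :
    0 ≤ ES a s k := by
  rw [ES]
  split
  · exact Finset.sum_nonneg fun t ht =>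
      Finset.prod_nonneg fun i hi => ha i ((Finset.mem_powersetCard.1 ht).1 hi)
  · exact le_refl 0

lemma ES_pos {a : ι → ℝ} {s : Finset ι} (ha : ∀ i ∈ s, 0 < a i) {k : ℤ}
    (hk : 0 ≤ k) (hk2 : k ≤ s.card) : 0 < ES a s k := by
  rw [ES, if_pos hk]
  obtain ⟨t, hts, ht⟩ := Finset.exists_subset_card_eq (show k.toNat ≤ s.card by omega)
  refine Finset.sum_pos (fun u hu => Finset.prod_pos fun i hi =>
    ha i ((Finset.mem_powersetCard.1 hu).1 hi))
    ⟨t, Finset.mem_powersetCard.2 ⟨hts, ht⟩⟩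

lemma ES_eq_zero {a : ι → ℝ} {s : Finset ι} {k : ℤ} (h : (s.card : ℤ) < k) :
    ES a s k = 0 := by
  rw [ES, if_pos (by omega), Finset.powersetCard_eq_empty.2 (by omega), Finset.sum_empty]

lemma ES_newton (a : ι → ℝ) (s : Finset ι) (ha : ∀ i ∈ s, 0 < a i) (k : ℤ) :
    ES a s (k + 1) * ES a s (k - 1) ≤ ES a s k ^ 2 := by
  induction s using Finset.cons_induction generalizing k with
  | empty =>
    rcases le_or_gt k 0 with h | h
    · rw [ES_neg _ _ (by omega : k - 1 < 0), mul_zero]; positivity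
    · rw [ES_eq_zero (by simp; omega), zero_mul]; positivity
  | cons x t hx ih =>
    have hax : 0 < a x := ha x (Finset.mem_cons_self x t)
    have hat : ∀ i ∈ t, 0 < a i := fun i hi => ha i (Finset.mem_cons.2 (Or.inr hi))
    have hat' : ∀ i ∈ t, 0 ≤ a i := fun i hi => (hat i hi).le
    rw [Finset.cons_eq_insert, ES_insert a hx, ES_insert a hx, ES_insert a hx]
    have e1 : k + 1 - 1 = k := by ring
    have e2 : k - 1 - 1 = k - 2 := by ring
    rw [e1, e2]
    set A := ES a t (k + 1) with hA
    set B := ES a t k with hB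
    set C := ES a t (k - 1) with hC
    set D := ES a t (k - 2) with hDD
    have hAn : 0 ≤ A := ES_nonneg hat' _
    have hBn : 0 ≤ B := ES_nonneg hat' _
    have hCn : 0 ≤ C := ES_nonneg hat' _
    have hDn : 0 ≤ D := ES_nonneg hat' _
    have IH1 : A * C ≤ B ^ 2 := ih hat k
    have IH2 : B * D ≤ C ^ 2 := by
      have := ih hat (k - 1)
      rw [show k - 1 + 1 = k by ring, show k - 1 - 1 = k - 2 by ring] at this
      exact this
    have hAD : A * D ≤ B * C := by
      rcases le_or_gt k 0 with hk0 | hk0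
      · have : D = 0 := ES_neg a t (by omega)
        rw [this, mul_zero]; positivity
      · by_cases hcard : (k + 1 : ℤ) ≤ t.card
        · have hBp : 0 < B := ES_pos hat (by omega) (by omega)
          have hCp : 0 < C := ES_pos hat (by omega) (by omega)
          nlinarith [mul_le_mul IH1 IH2 (mul_nonneg hBn hDn) (sq_nonneg B),
            mul_pos hBp hCp, mul_nonneg hAn hDn]
        · have : A = 0 := ES_eq_zero (by omega)
          rw [this, zero_mul]; positivity
    have h1 : 0 ≤ a x * (B * C - A * D) := mul_nonneg hax.le (by linarith)
    have h2 : 0 ≤ a x * a x * (C ^ 2 - B * D) :=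
      mul_nonneg (mul_nonneg hax.le hax.le) (by linarith)
    nlinarith [IH1, h1, h2]

end ESdef

section bridge

variable {n : ℕ}

lemma esymm_ES (k : ℤ) (a : Fin n → ℝ) : esymm n k a = ES a Finset.univ k := rfl

lemma esymmDel_ES (k : ℤ) (i : Fin n) (a : Fin n → ℝ) :
    esymmDel n k i a = ES a (Finset.univ.erase i) k := rfl

lemma card_erase_univ (i : Fin n) : (Finset.univ.erase i).card = n - 1 := by
  rw [Finset.card_erase_of_mem (Finset.mem_univ i), Finset.card_univ, Fintype.card_fin]

lemma esymm_split (k : ℤ) (i : Fin n) (a : Fin n → ℝ) :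
    esymm n k a = esymmDel n k i a + a i * esymmDel n (k - 1) i a := by
  rw [esymm_ES, esymmDel_ES, esymmDel_ES, ← ES_insert a (Finset.notMem_erase i _) k,
    Finset.insert_erase (Finset.mem_univ i)]

end bridge


/-- **Lemma 2.3, inequality (2.3).** Monotonicity in `k` of `ξ̲_k(a)` for
`0 < a_1 ≤ … ≤ a_n`:
`0 = ξ̲_0(a) < a_1/σ_1(a) = ξ̲_1(a) ≤ … ≤ ξ̲_{n-1}(a) < ξ̲_n(a) = 1`. -/
theorem xiInf_monotone_chain
    (n : ℕ) (hn : 2 ≤ n) (a : Fin n → ℝ)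
    (hpos : ∀ i, 0 < a i) (hmono : Monotone a) :
    xiInf n 0 a = 0 ∧
    0 < xiInf n 1 a ∧
    xiInf n 1 a = a ⟨0, by omega⟩ / esymm n 1 a ∧
    (∀ j : ℤ, 1 ≤ j → j ≤ (n : ℤ) - 1 → xiInf n j a ≤ xiInf n (j + 1) a) ∧
    xiInf n ((n : ℤ) - 1) a < 1 ∧
    xiInf n (n : ℤ) a = 1 := by
  have hn0 : 0 < n := by omega
  set i0 : Fin n := ⟨0, by omega⟩ with hi0
  have ha0 : 0 < a i0 := hpos i0
  -- basic positivity facts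
  have hD : ∀ x : Fin n → ℝ, x ≠ 0 → 0 < ∑ i, a i * x i ^ 2 := by
    intro x hx
    have : ∃ j, x j ≠ 0 := by
      by_contra h; push_neg at h; exact hx (funext h)
    obtain ⟨j, hj⟩ := this
    exact Finset.sum_pos' (fun i _ => mul_nonneg (hpos i).le (sq_nonneg _))
      ⟨j, Finset.mem_univ j, mul_pos (hpos j) (sq_pos_of_ne_zero hj)⟩
  have hXi_nonneg : ∀ (k : ℤ) (x : Fin n → ℝ), 0 ≤ Xi n k a x := by
    intro k x
    apply div_nonneg
    · refine Finset.sum_nonneg fun i _ => ?_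
      have hE : 0 ≤ esymmDel n (k - 1) i a := by
        rw [esymmDel_ES]; exact ES_nonneg (fun t _ => (hpos t).le) _
      exact mul_nonneg (mul_nonneg hE (sq_nonneg _)) (sq_nonneg _)
    · refine mul_nonneg ?_ (Finset.sum_nonneg fun i _ => mul_nonneg (hpos i).le (sq_nonneg _))
      rw [esymm_ES]; exact ES_nonneg (fun t _ => (hpos t).le) _
  have hbdd : ∀ k : ℤ, BddBelow {y | ∃ x : Fin n → ℝ, x ≠ 0 ∧ Xi n k a x = y} := by
    intro k
    exact ⟨0, by rintro y ⟨x, hx, rfl⟩; exact hXi_nonneg k x⟩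
  have hone_ne : (fun _ : Fin n => (1 : ℝ)) ≠ 0 := by
    intro h; exact one_ne_zero (congrFun h i0)
  have hne : ∀ k : ℤ, Set.Nonempty {y | ∃ x : Fin n → ℝ, x ≠ 0 ∧ Xi n k a x = y} := by
    intro k
    exact ⟨Xi n k a (fun _ => 1), ⟨fun _ => 1, hone_ne, rfl⟩⟩
  have hσpos : ∀ k : ℤ, 0 ≤ k → k ≤ (n : ℤ) → 0 < esymm n k a := by
    intro k h1 h2
    rw [esymm_ES]
    refine ES_pos (fun t _ => hpos t) h1 ?_
    rw [Finset.card_univ, Fintype.card_fin]; exact h2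
  have hsne : (Pi.single i0 (1 : ℝ) : Fin n → ℝ) ≠ 0 := by
    intro h
    have := congrFun h i0
    rw [Pi.single_eq_same] at this
    exact one_ne_zero this
  have hsum : ∀ c : Fin n → ℝ, ∑ i, c i * (Pi.single i0 (1 : ℝ) : Fin n → ℝ) i ^ 2 = c i0 := by
    intro c
    rw [Finset.sum_eq_single i0]
    · rw [Pi.single_eq_same]; ring
    · intro b _ hb; rw [Pi.single_eq_of_ne hb]; ring
    · intro h; exact absurd (Finset.mem_univ i0) h
  -- Part 1 : k = 0
  have hXi0 : ∀ x : Fin n → ℝ, Xi n 0 a x = 0 := by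
    intro x
    have h : ∀ i : Fin n, esymmDel n (-1) i a = 0 := fun i =>
      ES_neg a _ (by norm_num)
    simp [Xi, h]
  have part1 : xiInf n 0 a = 0 := by
    have hset : {y | ∃ x : Fin n → ℝ, x ≠ 0 ∧ Xi n 0 a x = y} = {0} := by
      ext y
      simp only [Set.mem_setOf_eq, Set.mem_singleton_iff]
      constructor
      · rintro ⟨x, hx, rfl⟩; exact hXi0 x
      · rintro rfl; exact ⟨Pi.single i0 1, hsne, hXi0 _⟩
    rw [xiInf, hset, csInf_singleton]
  -- Part 2,3 : k = 1
  have hE0 : ∀ i : Fin n, esymmDel n (1 - 1 : ℤ) i a = 1 := by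
    intro i
    rw [show (1 - 1 : ℤ) = 0 by norm_num, esymmDel_ES, ES_zero]
  have hσ1 : 0 < esymm n 1 a := hσpos 1 (by norm_num) (by omega)
  have hXi1 : ∀ x : Fin n → ℝ,
      Xi n 1 a x = (∑ i, a i ^ 2 * x i ^ 2) / (esymm n 1 a * ∑ i, a i * x i ^ 2) := by
    intro x
    unfold Xi
    congr 1
    refine Finset.sum_congr rfl fun i _ => ?_
    rw [hE0 i]; ring
  have hlow1 : ∀ x : Fin n → ℝ, x ≠ 0 → a i0 / esymm n 1 a ≤ Xi n 1 a x := by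
    intro x hx
    rw [hXi1, div_le_div_iff₀ hσ1 (mul_pos hσ1 (hD x hx))]
    have hND : a i0 * (∑ i, a i * x i ^ 2) ≤ ∑ i, a i ^ 2 * x i ^ 2 := by
      rw [Finset.mul_sum]
      refine Finset.sum_le_sum fun i _ => ?_
      have h0i : a i0 ≤ a i := hmono (Fin.le_def.2 (Nat.zero_le _))
      nlinarith [mul_nonneg (mul_nonneg (hpos i).le (sq_nonneg (x i))) (sub_nonneg.2 h0i)]
    nlinarith [mul_le_mul_of_nonneg_right hND hσ1.le]
  have hXi1val : Xi n 1 a (Pi.single i0 1) = a i0 / esymm n 1 a := by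
    rw [hXi1, hsum (fun i => a i ^ 2), hsum a]
    rw [pow_two]
    rw [mul_comm (esymm n 1 a) (a i0), ← div_div, mul_div_assoc, div_self ha0.ne', mul_one]
  have part3 : xiInf n 1 a = a i0 / esymm n 1 a := by
    refine le_antisymm (csInf_le (hbdd 1) ⟨Pi.single i0 1, hsne, hXi1val⟩) ?_
    refine le_csInf (hne 1) ?_
    rintro y ⟨x, hx, rfl⟩
    exact hlow1 x hx
  have part2 : 0 < xiInf n 1 a := by
    rw [part3]; exact div_pos ha0 hσ1
  -- Part 4 : monotonicity
  have hkey : ∀ (i : Fin n) (j : ℤ), 1 ≤ j → j ≤ (n : ℤ) - 1 →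
      esymmDel n (j - 1) i a * esymm n (j + 1) a ≤ esymmDel n j i a * esymm n j a := by
    intro i j hj1 hj2
    have hsp1 := esymm_split j i a
    have hsp2 := esymm_split (j + 1) i a
    rw [show j + 1 - 1 = j by ring] at hsp2
    have hnewton : ES a (Finset.univ.erase i) (j + 1) * ES a (Finset.univ.erase i) (j - 1)
        ≤ ES a (Finset.univ.erase i) j ^ 2 := ES_newton a _ (fun t _ => hpos t) j
    rw [esymmDel_ES, esymmDel_ES, hsp1, hsp2, esymmDel_ES, esymmDel_ES, esymmDel_ES]
    have hP : 0 ≤ ES a (Finset.univ.erase i) (j - 1) :=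
      ES_nonneg (fun t _ => (hpos t).le) _
    have hQ : 0 ≤ ES a (Finset.univ.erase i) j :=
      ES_nonneg (fun t _ => (hpos t).le) _
    nlinarith [hnewton, (hpos i).le]
  have hpw : ∀ (j : ℤ), 1 ≤ j → j ≤ (n : ℤ) - 1 → ∀ x : Fin n → ℝ, x ≠ 0 →
      Xi n j a x ≤ Xi n (j + 1) a x := by
    intro j hj1 hj2 x hx
    have hσj : 0 < esymm n j a := hσpos j (by omega) (by omega)
    have hσj1 : 0 < esymm n (j + 1) a := hσpos _ (by omega) (by omega)
    have hDx := hD x hx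
    unfold Xi
    rw [show j + 1 - 1 = j by ring]
    rw [div_le_div_iff₀ (mul_pos hσj hDx) (mul_pos hσj1 hDx)]
    have hsumle : (∑ i, esymmDel n (j - 1) i a * a i ^ 2 * x i ^ 2) * esymm n (j + 1) a
        ≤ (∑ i, esymmDel n j i a * a i ^ 2 * x i ^ 2) * esymm n j a := by
      rw [Finset.sum_mul, Finset.sum_mul]
      refine Finset.sum_le_sum fun i _ => ?_
      have hk := hkey i j hj1 hj2
      have hw : (0 : ℝ) ≤ a i ^ 2 * x i ^ 2 := by positivity
      nlinarith [mul_le_mul_of_nonneg_right hk hw]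
    nlinarith [mul_le_mul_of_nonneg_right hsumle hDx.le]
  have part4 : ∀ j : ℤ, 1 ≤ j → j ≤ (n : ℤ) - 1 → xiInf n j a ≤ xiInf n (j + 1) a := by
    intro j hj1 hj2
    refine le_csInf (hne (j + 1)) ?_
    rintro y ⟨x, hx, rfl⟩
    exact le_trans (csInf_le (hbdd j) ⟨x, hx, rfl⟩) (hpw j hj1 hj2 x hx)
  -- Part 5 : xiInf (n-1) < 1
  have part5 : xiInf n ((n : ℤ) - 1) a < 1 := by
    have hσ : 0 < esymm n ((n : ℤ) - 1) a := hσpos _ (by omega) (by omega)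
    have hval : Xi n ((n : ℤ) - 1) a (Pi.single i0 1) < 1 := by
      unfold Xi
      rw [hsum (fun i => esymmDel n ((n : ℤ) - 1 - 1) i a * a i ^ 2), hsum a]
      have hE1pos : 0 < esymmDel n ((n : ℤ) - 1) i0 a := by
        rw [esymmDel_ES]
        refine ES_pos (fun t _ => hpos t) (by omega) ?_
        rw [card_erase_univ]; push_cast; omega
      have hE2nn : 0 ≤ esymmDel n ((n : ℤ) - 1 - 1) i0 a := by
        rw [esymmDel_ES]; exact ES_nonneg (fun t _ => (hpos t).le) _
      rw [div_lt_one (mul_pos hσ ha0)]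
      have hsplit := esymm_split ((n : ℤ) - 1) i0 a
      have h2 : esymm n ((n : ℤ) - 1) a * a i0
          = esymmDel n ((n : ℤ) - 1) i0 a * a i0
            + esymmDel n ((n : ℤ) - 1 - 1) i0 a * a i0 ^ 2 := by
        rw [hsplit]; ring
      linarith [mul_pos hE1pos ha0]
    calc xiInf n ((n : ℤ) - 1) a ≤ Xi n ((n : ℤ) - 1) a (Pi.single i0 1) :=
          csInf_le (hbdd _) ⟨Pi.single i0 1, hsne, rfl⟩
      _ < 1 := hval
  -- Part 6 : k = n
  have hEdelTop : ∀ i : Fin n, esymmDel n ((n : ℤ) - 1) i a = ∏ j ∈ Finset.univ.erase i, a j := by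
    intro i
    rw [esymmDel_ES, ES, if_pos (by omega)]
    rw [show ((n : ℤ) - 1).toNat = (Finset.univ.erase i).card by rw [card_erase_univ]; omega]
    rw [Finset.powersetCard_self, Finset.sum_singleton]
  have hEtop : esymm n (n : ℤ) a = ∏ j, a j := by
    rw [esymm_ES, ES, if_pos (Int.natCast_nonneg n)]
    rw [show ((n : ℤ)).toNat = (Finset.univ : Finset (Fin n)).card by
      rw [Finset.card_univ, Fintype.card_fin]; omega]
    rw [Finset.powersetCard_self, Finset.sum_singleton]
  have hXin : ∀ x : Fin n → ℝ, x ≠ 0 → Xi n (n : ℤ) a x = 1 := by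
    intro x hx
    have hterm : ∀ i : Fin n,
        esymmDel n ((n : ℤ) - 1) i a * a i ^ 2 = esymm n (n : ℤ) a * a i := by
      intro i
      rw [hEdelTop, hEtop, ← Finset.mul_prod_erase _ a (Finset.mem_univ i)]
      ring
    have hnum : ∑ i, esymmDel n ((n : ℤ) - 1) i a * a i ^ 2 * x i ^ 2
        = esymm n (n : ℤ) a * ∑ i, a i * x i ^ 2 := by
      rw [Finset.mul_sum]
      refine Finset.sum_congr rfl fun i _ => ?_
      rw [hterm i]; ring
    unfold Xi
    rw [hnum]
    exact div_self (mul_pos (hσpos (n : ℤ) (Int.natCast_nonneg n) le_rfl) (hD x hx)).ne'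
  have part6 : xiInf n (n : ℤ) a = 1 := by
    have hset : {y | ∃ x : Fin n → ℝ, x ≠ 0 ∧ Xi n (n : ℤ) a x = y} = {1} := by
      ext y
      simp only [Set.mem_setOf_eq, Set.mem_singleton_iff]
      constructor
      · rintro ⟨x, hx, rfl⟩; exact hXin x hx
      · rintro rfl; exact ⟨Pi.single i0 1, hsne, hXin _ hsne⟩
    rw [xiInf, hset, csInf_singleton]
  exact ⟨part1, part2, part3, part4, part5, part6⟩
end

section
/- Let p, q ∈ ℝⁿ, s ∈ ℝ, and let M be the real symmetric n×n matrix with entries M_{ij} = p_i δ_{ij} + s q_i q_j (i.e. M = diag(p) + s qqᵀ). Then for every 1 ≤ k ≤ n, σ_k(λ(M)) = σ_k(p) + s Σ_{i=1}^n σ_{k−1;i}(p) q_i², where λ(M) ∈ ℝⁿ is the eigenvalue vector of M (eigenvalues listed with multiplicity). -/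
open Finset Filter MeasureTheory Set

section AuxLemma27
open Polynomial Matrix

lemma det_diagonal_add_outer {n : ℕ} (d u : Fin n → ℝ) (c : ℝ) (hd : ∀ i, d i ≠ 0) :
    Matrix.det (Matrix.diagonal d + Matrix.of (fun i j => c * u i * u j)) =
      (∏ i, d i) + c * ∑ i, u i ^ 2 * ∏ j ∈ Finset.univ.erase i, d j := by
  have hA : IsUnit (Matrix.diagonal d).det := by
    rw [Matrix.det_diagonal]
    exact (Finset.prod_ne_zero_iff.mpr fun i _ => hd i).isUnit
  have hinv : (Matrix.diagonal d)⁻¹ = Matrix.diagonal (fun i => (d i)⁻¹) := by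
    apply Matrix.inv_eq_right_inv
    rw [Matrix.diagonal_mul_diagonal]
    convert Matrix.diagonal_one with i
    exact mul_inv_cancel₀ (hd i)
  have hrw : Matrix.of (fun i j => c * u i * u j)
      = Matrix.replicateCol Unit u * Matrix.replicateRow Unit (fun j => c * u j) := by
    ext i j
    simp [Matrix.mul_apply, Matrix.replicateCol, Matrix.replicateRow]
    ring
  rw [hrw, Matrix.det_add_replicateCol_mul_replicateRow hA, Matrix.det_diagonal, hinv]
  have hentry : (1 + (Matrix.replicateRow Unit fun j => c * u j) *
      Matrix.diagonal (fun i => (d i)⁻¹) * Matrix.replicateCol Unit u).det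
      = 1 + ∑ j, c * u j * (d j)⁻¹ * u j := by
    rw [Matrix.det_unique]
    simp [Matrix.mul_apply, Matrix.replicateRow, Matrix.replicateCol, Matrix.diagonal, Finset.mul_sum]
  rw [hentry, mul_add, mul_one, Finset.mul_sum]
  congr 1
  rw [Finset.mul_sum]
  apply Finset.sum_congr rfl
  intro i _
  have h2 : (∏ j, d j) * (d i)⁻¹ = ∏ j ∈ Finset.univ.erase i, d j := by
    rw [← Finset.mul_prod_erase Finset.univ d (Finset.mem_univ i)]
    rw [mul_comm (d i), mul_assoc, mul_inv_cancel₀ (hd i), mul_one]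
  calc (∏ j, d j) * (c * u i * (d i)⁻¹ * u i)
      = c * u i ^2 * ((∏ j, d j) * (d i)⁻¹) := by ring
    _ = c * (u i ^ 2 * ∏ j ∈ Finset.univ.erase i, d j) := by rw [h2]; ring

lemma det_sub_eq_prod_eigenvalues {n : ℕ} (M : Matrix (Fin n) (Fin n) ℝ)
    (hM : M.IsHermitian) (x : ℝ) :
    (x • (1 : Matrix (Fin n) (Fin n) ℝ) - M).det = ∏ i, (x - hM.eigenvalues i) := by
  set U : Matrix (Fin n) (Fin n) ℝ := (Matrix.IsHermitian.eigenvectorUnitary hM : Matrix (Fin n) (Fin n) ℝ)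
  have hmem := (Matrix.IsHermitian.eigenvectorUnitary hM).2
  have h1 : star U * U = 1 := (Unitary.mem_iff.mp hmem).1
  have hD : star U * M * U = Matrix.diagonal hM.eigenvalues := by
    have := hM.conjStarAlgAut_star_eigenvectorUnitary
    rw [Unitary.conjStarAlgAut_apply, Unitary.coe_star, star_star] at this
    rwa [RCLike.ofReal_real_eq_id, Function.id_comp] at this
  have key : star U * (x • (1 : Matrix (Fin n) (Fin n) ℝ) - M) * U
      = x • (1 : Matrix (Fin n) (Fin n) ℝ) - Matrix.diagonal hM.eigenvalues := by
    rw [Matrix.mul_sub, Matrix.sub_mul, hD, Matrix.mul_smul, Matrix.mul_one,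
      Matrix.smul_mul, h1]
  have hdet := congrArg Matrix.det key
  rw [Matrix.det_mul, Matrix.det_mul] at hdet
  have hUdet : (star U).det * U.det = 1 := by
    rw [← Matrix.det_mul, h1, Matrix.det_one]
  have hL : (star U).det * (x • (1 : Matrix (Fin n) (Fin n) ℝ) - M).det * U.det
      = (x • (1 : Matrix (Fin n) (Fin n) ℝ) - M).det := by
    rw [mul_comm ((star U).det), mul_assoc, hUdet, mul_one]
  rw [hL] at hdet
  rw [hdet]
  have : x • (1 : Matrix (Fin n) (Fin n) ℝ) - Matrix.diagonal hM.eigenvalues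
      = Matrix.diagonal (fun i => x - hM.eigenvalues i) := by
    rw [Matrix.smul_one_eq_diagonal, Matrix.diagonal_sub]
  rw [this, Matrix.det_diagonal]

lemma coeff_prod_X_sub_C_fin {n : ℕ} (t : Finset (Fin n)) (f : Fin n → ℝ) (m : ℕ)
    (hm : m ≤ t.card) :
    (∏ i ∈ t, (X - C (f i))).coeff (t.card - m)
      = (-1) ^ m * ∑ u ∈ Finset.powersetCard m t, ∏ i ∈ u, f i := by
  have hcard : Multiset.card (t.val.map f) = t.card := by simp
  have h := Multiset.prod_X_sub_C_coeff (t.val.map f)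
    (k := t.card - m) (by rw [hcard]; omega)
  rw [hcard] at h
  have hidx : t.card - (t.card - m) = m := by omega
  rw [hidx, Multiset.map_map, Finset.esymm_map_val] at h
  rw [Finset.prod_eq_multiset_prod]
  simp only [Function.comp_def] at h
  exact h

end AuxLemma27

/-- **Lemma 2.7.** If `M = diag(p) + s·qqᵀ`, then
`σ_k(λ(M)) = σ_k(p) + s·Σ_i σ_{k-1;i}(p) q_i²` for every `1 ≤ k ≤ n`. -/
theorem esymm_eigenvalues_diag_add_rank_one
    (n : ℕ) (p q : Fin n → ℝ) (s : ℝ)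
    (M : Matrix (Fin n) (Fin n) ℝ)
    (hM : M = fun i j => (if i = j then p i else 0) + s * q i * q j)
    (hHerm : M.IsHermitian)
    (k : ℕ) (hk1 : 1 ≤ k) (hkn : k ≤ n) :
    esymm n (k : ℤ) hHerm.eigenvalues
      = esymm n (k : ℤ) p + s * ∑ i, esymmDel n ((k : ℤ) - 1) i p * q i ^ 2 := by
  classical
  open Polynomial in
  set lam := hHerm.eigenvalues with hlam
  have hpoly : (∏ i, (X - C (lam i)))
      = (∏ i, (X - C (p i)))
        - C s * ∑ i, (C (q i)) ^ 2 * ∏ j ∈ Finset.univ.erase i, (X - C (p j)) := by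
    apply Polynomial.eq_of_infinite_eval_eq
    apply Set.Infinite.mono (s := (Set.range p)ᶜ)
    · intro x hx
      simp only [Set.mem_compl_iff, Set.mem_range, not_exists] at hx
      have hx' : ∀ i, x - p i ≠ 0 := fun i => sub_ne_zero.mpr (fun h => hx i h.symm)
      simp only [Set.mem_setOf_eq, Polynomial.eval_prod, Polynomial.eval_sub,
        Polynomial.eval_mul, Polynomial.eval_X, Polynomial.eval_C, Polynomial.eval_pow,
        Polynomial.eval_finset_sum]
      have h1 := det_sub_eq_prod_eigenvalues M hHerm x
      have h2 : x • (1 : Matrix (Fin n) (Fin n) ℝ) - M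
          = Matrix.diagonal (fun i => x - p i)
            + Matrix.of (fun i j => (-s) * q i * q j) := by
        subst hM
        ext i j
        change (x • (1 : Matrix (Fin n) (Fin n) ℝ)) i j - ((if i = j then p i else 0) + s * q i * q j) = _
        simp only [Matrix.sub_apply, Matrix.smul_apply, Matrix.one_apply,
          Matrix.add_apply, Matrix.diagonal_apply, Matrix.of_apply, smul_eq_mul]
        split_ifs <;> ring
      rw [h2, det_diagonal_add_outer _ _ _ hx'] at h1
      rw [hlam, ← h1]
      ring
    · exact (Set.finite_range p).infinite_compl
  obtain ⟨m, rfl⟩ : ∃ m, k = m + 1 := ⟨k - 1, by omega⟩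
  have hE := congrArg (fun P : Polynomial ℝ => P.coeff (n - (m + 1))) hpoly
  simp only at hE
  have hcardu : (Finset.univ : Finset (Fin n)).card = n := by simp
  have hQ := coeff_prod_X_sub_C_fin Finset.univ lam (m + 1) (by rw [hcardu]; omega)
  rw [hcardu] at hQ
  have hP := coeff_prod_X_sub_C_fin Finset.univ p (m + 1) (by rw [hcardu]; omega)
  rw [hcardu] at hP
  have hD : ∀ i : Fin n, (∏ j ∈ Finset.univ.erase i, (X - C (p j))).coeff (n - (m + 1))
      = (-1) ^ m * ∑ u ∈ Finset.powersetCard m (Finset.univ.erase i), ∏ j ∈ u, p j := by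
    intro i
    have hce : (Finset.univ.erase i).card = n - 1 := by
      rw [Finset.card_erase_of_mem (Finset.mem_univ i), hcardu]
    have h := coeff_prod_X_sub_C_fin (Finset.univ.erase i) p m (by rw [hce]; omega)
    rw [hce] at h
    rwa [show n - 1 - m = n - (m + 1) by omega] at h
  simp only [Polynomial.coeff_sub, ← Polynomial.C_pow, Polynomial.coeff_C_mul,
    Polynomial.finset_sum_coeff] at hE
  have hsum : (∑ i, q i ^ 2 * (∏ j ∈ Finset.univ.erase i, (X - C (p j))).coeff (n - (m + 1)))
      = (-1 : ℝ) ^ m * ∑ i, (∑ u ∈ Finset.powersetCard m (Finset.univ.erase i), ∏ j ∈ u, p j)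
          * q i ^ 2 := by
    rw [Finset.mul_sum]
    refine Finset.sum_congr rfl fun i _ => ?_
    rw [hD i]; ring
  rw [hQ, hP, hsum] at hE
  have hesymmL : esymm n ((m + 1 : ℕ) : ℤ) lam
      = ∑ u ∈ Finset.powersetCard (m + 1) Finset.univ, ∏ i ∈ u, lam i := by
    simp only [esymm]
    rw [if_pos (by positivity)]
    norm_num
  have hesymmP : esymm n ((m + 1 : ℕ) : ℤ) p
      = ∑ u ∈ Finset.powersetCard (m + 1) Finset.univ, ∏ i ∈ u, p i := by
    simp only [esymm]
    rw [if_pos (by positivity)]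
    norm_num
  have hm1 : ((m + 1 : ℕ) : ℤ) - 1 = ((m : ℕ) : ℤ) := by push_cast; ring
  have hdel : ∀ i : Fin n, esymmDel n (((m + 1 : ℕ) : ℤ) - 1) i p
      = ∑ u ∈ Finset.powersetCard m (Finset.univ.erase i), ∏ j ∈ u, p j := by
    intro i
    rw [hm1]
    simp only [esymmDel]
    rw [if_pos (by positivity)]
    norm_num
  rw [hesymmL, hesymmP]
  simp only [hdel]
  have hne : ((-1 : ℝ)) ^ (m + 1) ≠ 0 := pow_ne_zero _ (by norm_num)
  apply mul_left_cancel₀ hne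
  rw [hE]
  ring
end

section
/- Let 0 ≤ l < k ≤ n and λ ∈ Γ_k. Then for every 1 ≤ i ≤ n, σ_{k−1;i}(λ)·σ_l(λ) − σ_k(λ)·σ_{l−1;i}(λ) > 0; equivalently, since ∂σ_j(λ)/∂λ_i = σ_{j−1;i}(λ), the partial derivative ∂/∂λ_i of the Hessian quotient operator σ_k(λ)/σ_l(λ) is strictly positive on Γ_k. Moreover, for λ ∈ Γ_k and 1 ≤ l < k the inequality σ_{k−1;i}(λ)·σ_{l;i}(λ) ≥ σ_{k;i}(λ)·σ_{l−1;i}(λ) holds for every i. -/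
open Finset Filter MeasureTheory Set

namespace HQE
section
open Multiset Polynomial


lemma esymm_zero' (s : Multiset ℝ) : s.esymm 0 = 1 := by
  simp [Multiset.esymm, Multiset.powersetCard_zero_left]

lemma esymm_of_lt {s : Multiset ℝ} {r : ℕ} (h : Multiset.card s < r) : s.esymm r = 0 := by
  simp [Multiset.esymm, Multiset.powersetCard_eq_empty _ h]

lemma esymm_cons (x : ℝ) (s : Multiset ℝ) (r : ℕ) :
    (x ::ₘ s).esymm (r + 1) = s.esymm (r + 1) + x * s.esymm r := by
  rw [Multiset.esymm, Multiset.powersetCard_cons, Multiset.map_add, Multiset.sum_add,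
    Multiset.map_map]
  congr 1
  rw [Multiset.esymm, ← Multiset.sum_map_mul_left]
  congr 1
  apply Multiset.map_congr rfl
  intro t _
  simp [Multiset.prod_cons]

lemma esymm_card (s : Multiset ℝ) : s.esymm (Multiset.card s) = s.prod := by
  induction s using Multiset.induction_on with
  | empty => simp [esymm_zero']
  | cons x s ih =>
    rw [Multiset.card_cons, esymm_cons, esymm_of_lt (by omega), ih, Multiset.prod_cons, zero_add]

lemma esymm_one' (s : Multiset ℝ) : s.esymm 1 = s.sum := by
  induction s using Multiset.induction_on with
  | empty => simp [esymm_of_lt]; exact esymm_of_lt (by simp)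
  | cons x s ih =>
    have h := esymm_cons x s 0
    rw [zero_add, esymm_zero', mul_one] at h
    rw [h, Multiset.sum_cons, ih, add_comm]

lemma sum_sq_eq (s : Multiset ℝ) :
    s.sum ^ 2 = (s.map (fun x => x ^ 2)).sum + 2 * s.esymm 2 := by
  induction s using Multiset.induction_on with
  | empty => simp [esymm_of_lt]; exact esymm_of_lt (by simp)
  | cons x s ih =>
    have h := esymm_cons x s 1
    rw [esymm_one'] at h
    rw [Multiset.sum_cons, Multiset.map_cons, Multiset.sum_cons, h]
    nlinarith [ih]

lemma cs_ineq (s : Multiset ℝ) :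
    s.sum ^ 2 ≤ (Multiset.card s : ℝ) * (s.map (fun x => x ^ 2)).sum := by
  induction s using Multiset.induction_on with
  | empty => simp
  | cons x s ih =>
    rw [Multiset.sum_cons, Multiset.map_cons, Multiset.sum_cons, Multiset.card_cons]
    rcases Multiset.empty_or_exists_mem s with rfl | _
    · simp
    · have hc : (1:ℝ) ≤ (Multiset.card s : ℝ) := by
        have : 1 ≤ Multiset.card s := by
          rcases ‹∃ a, a ∈ s› with ⟨a, ha⟩
          exact Multiset.card_pos.2 (fun h => by simp [h] at ha)
        exact_mod_cast this
      have hT : 0 ≤ (s.map (fun x => x ^ 2)).sum :=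
        Multiset.sum_nonneg (fun y hy => by
          obtain ⟨z, _, rfl⟩ := Multiset.mem_map.1 hy; positivity)
      push_cast
      nlinarith [ih, sq_nonneg ((Multiset.card s : ℝ) * x - s.sum), sq_nonneg (x - s.sum),
        mul_pos (lt_of_lt_of_le zero_lt_one hc) (lt_of_lt_of_le zero_lt_one hc)]




/-- reversal identity -/
lemma esymm_rev (s : Multiset ℝ) (h0 : ∀ x ∈ s, x ≠ 0) :
    ∀ r ≤ Multiset.card s, s.esymm (Multiset.card s - r) = s.prod * (s.map (·⁻¹)).esymm r := by
  induction s using Multiset.induction_on with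
  | empty =>
    intro r hr
    rw [Multiset.card_zero] at hr
    interval_cases r
    simp [esymm_zero']
  | cons x s ih =>
    intro r hr
    have hx : x ≠ 0 := h0 x (Multiset.mem_cons_self x s)
    have h0' : ∀ y ∈ s, y ≠ 0 := fun y hy => h0 y (Multiset.mem_cons_of_mem hy)
    have hcard : Multiset.card (x ::ₘ s) = Multiset.card s + 1 := Multiset.card_cons x s
    have hmap : (x ::ₘ s).map (·⁻¹) = x⁻¹ ::ₘ s.map (·⁻¹) := Multiset.map_cons _ x s
    have hprod : (x ::ₘ s).prod = x * s.prod := Multiset.prod_cons x s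
    set c := Multiset.card s with hc
    rcases Nat.eq_zero_or_pos r with rfl | hrpos
    · -- r = 0
      rw [Nat.sub_zero, esymm_card, hmap, esymm_zero', mul_one]
    · obtain ⟨r', rfl⟩ : ∃ r', r = r' + 1 := ⟨r - 1, by omega⟩
      rw [hcard] at hr
      rw [hmap, hprod, esymm_cons]
      rcases eq_or_lt_of_le hr with heq | hlt
      · -- r' + 1 = c + 1, i.e. r' = c
        have hr' : r' = c := by omega
        subst hr'
        have e1 : (s.map (·⁻¹)).esymm (c + 1) = 0 := esymm_of_lt (by simp; omega)
        have e2 : s.prod * (s.map (·⁻¹)).esymm c = 1 := by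
          have := ih h0' c (le_refl c)
          rw [Nat.sub_self, esymm_zero'] at this
          exact this.symm
        rw [hcard, Nat.sub_self, esymm_zero', e1, zero_add,
          show x * s.prod * (x⁻¹ * (s.map (·⁻¹)).esymm c) =
            (x * x⁻¹) * (s.prod * (s.map (·⁻¹)).esymm c) from by ring,
          mul_inv_cancel₀ hx, e2, one_mul]
      · -- r' + 1 ≤ c
        have hr1 : r' + 1 ≤ c := by omega
        have key1 : s.prod * (s.map (·⁻¹)).esymm (r' + 1) = s.esymm (c - (r' + 1)) :=
          (ih h0' (r' + 1) hr1).symm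
        have key2 : s.prod * (s.map (·⁻¹)).esymm r' = s.esymm (c - r') :=
          (ih h0' r' (by omega)).symm
        have hsub : Multiset.card (x ::ₘ s) - (r' + 1) = (c - (r' + 1)) + 1 := by
          rw [hcard]; omega
        rw [hsub, esymm_cons]
        have hcc : c - r' = (c - (r' + 1)) + 1 := by omega
        calc s.esymm (c - (r'+1) + 1) + x * s.esymm (c - (r'+1))
            = s.esymm (c - r') + x * s.esymm (c - (r'+1)) := by rw [hcc]
          _ = x * s.prod * ((s.map (·⁻¹)).esymm (r'+1) + x⁻¹ * (s.map (·⁻¹)).esymm r') := by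
              rw [mul_add]
              rw [show x * s.prod * ((s.map (·⁻¹)).esymm (r'+1)) =
                x * (s.prod * (s.map (·⁻¹)).esymm (r'+1)) from by ring, key1]
              rw [show x * s.prod * (x⁻¹ * (s.map (·⁻¹)).esymm r') =
                (x * x⁻¹) * (s.prod * (s.map (·⁻¹)).esymm r') from by ring, key2,
                mul_inv_cancel₀ hx, one_mul]
              ring



lemma two_choose_two (m : ℕ) (h : 1 ≤ m) : 2 * m.choose 2 = m * (m - 1) := by
  obtain ⟨m', rfl⟩ : ∃ m', m = m' + 1 := ⟨m - 1, by omega⟩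
  have h2 : (m' + 1) * m' = (m' + 1).choose 2 * 2 := by
    simpa [Nat.choose_one_right] using Nat.add_one_mul_choose_eq m' 1
  rw [Nat.add_sub_cancel]
  omega

lemma base_arith (a C X T σ : ℝ) (hC2 : 2 * C = a * (a - 1)) (hcs : X ≤ a * T)
    (hsq : X = T + 2 * σ) (ha : 0 ≤ a) : a ^ 2 * (1 * σ) ≤ 1 * C * X := by
  have h : a * X ≤ a * (a * T) := mul_le_mul_of_nonneg_left hcs ha
  have h5 : 2 * C * X = a * (a - 1) * X := by rw [hC2]
  have h6 : a ^ 2 * X = a ^ 2 * T + 2 * (a ^ 2 * σ) := by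
    calc a ^ 2 * X = a ^ 2 * (T + 2 * σ) := by rw [← hsq]
      _ = a ^ 2 * T + 2 * (a ^ 2 * σ) := by ring
  nlinarith [h, h5, h6]

/-- Newton base case j = 0 : m^2 σ₂ ≤ C(m,2) σ₁² -/
lemma newton_base (s : Multiset ℝ) :
    ((Multiset.card s).choose 1 : ℝ) ^ 2 * (s.esymm 0 * s.esymm 2) ≤
      ((Multiset.card s).choose 0 : ℝ) * ((Multiset.card s).choose 2 : ℝ) * s.esymm 1 ^ 2 := by
  rcases Nat.eq_zero_or_pos (Multiset.card s) with h0 | h1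
  · rw [esymm_zero', esymm_of_lt (by omega)]
    simp
    positivity
  have hC2 : (2 : ℝ) * ((Multiset.card s).choose 2 : ℝ) =
      (Multiset.card s : ℝ) * ((Multiset.card s : ℝ) - 1) := by
    have hh := two_choose_two (Multiset.card s) h1
    have hcast : ((2 * (Multiset.card s).choose 2 : ℕ) : ℝ)
        = (((Multiset.card s) * ((Multiset.card s) - 1) : ℕ) : ℝ) := by rw [hh]
    push_cast [Nat.cast_sub h1] at hcast
    linarith
  rw [Nat.choose_one_right, Nat.choose_zero_right, esymm_zero', esymm_one']
  rw [Nat.cast_one]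
  exact base_arith _ _ _ _ _ hC2 (cs_ineq s) (sum_sq_eq s) (by positivity)

/-- Newton top case: j + 2 = m -/
lemma newton_top (s : Multiset ℝ) (h2 : 2 ≤ Multiset.card s) :
    ((Multiset.card s).choose (Multiset.card s - 1) : ℝ) ^ 2 *
        (s.esymm (Multiset.card s - 2) * s.esymm (Multiset.card s)) ≤
      ((Multiset.card s).choose (Multiset.card s - 2) : ℝ) *
        ((Multiset.card s).choose (Multiset.card s) : ℝ) *
        s.esymm (Multiset.card s - 1) ^ 2 := by
  by_cases h0 : ∃ x ∈ s, x = 0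
  · obtain ⟨x, hx, rfl⟩ := h0
    rw [esymm_card s, Multiset.prod_eq_zero hx, mul_zero, mul_zero]
    positivity
  push_neg at h0
  set ι := s.map (·⁻¹) with hι
  have hcι : Multiset.card ι = Multiset.card s := by rw [hι, Multiset.card_map]
  have e2 : s.esymm (Multiset.card s - 2) = s.prod * ι.esymm 2 := esymm_rev s h0 2 h2
  have e1 : s.esymm (Multiset.card s - 1) = s.prod * ι.esymm 1 := esymm_rev s h0 1 (by omega)
  have e0 : s.esymm (Multiset.card s) = s.prod := esymm_card s
  have hb := newton_base ι
  rw [hcι, esymm_zero'] at hb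
  have hsym1 : (Multiset.card s).choose (Multiset.card s - 1) = (Multiset.card s).choose 1 :=
    Nat.choose_symm (by omega)
  have hsym2 : (Multiset.card s).choose (Multiset.card s - 2) = (Multiset.card s).choose 2 :=
    Nat.choose_symm (by omega)
  have hsym0 : (Multiset.card s).choose (Multiset.card s) = (Multiset.card s).choose 0 := by
    rw [Nat.choose_self, Nat.choose_zero_right]
  rw [hsym1, hsym2, hsym0, e2, e1, e0]
  have hp2 : (0:ℝ) ≤ s.prod ^ 2 := sq_nonneg _
  nlinarith [mul_le_mul_of_nonneg_left hb hp2]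

/-- log-concavity of binomial coefficients -/
lemma choose_logconcave (m j : ℕ) : m.choose j * m.choose (j + 2) ≤ m.choose (j + 1) ^ 2 := by
  rcases lt_or_ge m (j + 2) with h | h
  · rw [Nat.choose_eq_zero_of_lt h, mul_zero]; positivity
  set A := m.choose j
  set B := m.choose (j + 1)
  set D := m.choose (j + 2)
  have e1 : B * (j + 1) = A * (m - j) := Nat.choose_succ_right_eq m j
  have e2 : D * (j + 2) = B * (m - (j + 1)) := Nat.choose_succ_right_eq m (j + 1)
  have key : (A * D) * ((j+1) * (j+2) * (m-j)) = (B * B) * ((j+1) * (j+1) * (m-(j+1))) := by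
    calc (A * D) * ((j+1) * (j+2) * (m-j)) = (A * (m-j)) * (D * (j+2)) * (j+1) := by ring
      _ = (B * (j+1)) * (B * (m-(j+1))) * (j+1) := by rw [← e1, ← e2]
      _ = (B * B) * ((j+1) * (j+1) * (m-(j+1))) := by ring
  have hmono : (j+1) * (j+1) * (m-(j+1)) ≤ (j+1) * (j+2) * (m-j) :=
    Nat.mul_le_mul (Nat.mul_le_mul_left _ (by omega)) (by omega)
  have hpos : 0 < (j+1) * (j+2) * (m-j) := by
    have : 0 < m - j := by omega
    positivity
  have : (A * D) * ((j+1) * (j+2) * (m-j)) ≤ (B * B) * ((j+1) * (j+2) * (m-j)) := by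
    rw [key]
    exact Nat.mul_le_mul_left _ hmono
  have := Nat.le_of_mul_le_mul_right this hpos
  nlinarith [this]

lemma choose_mul_eq (m r : ℕ) (hm : 1 ≤ m) :
    (m - 1).choose r * m = m.choose r * (m - r) := by
  obtain ⟨m', rfl⟩ : ∃ m', m = m' + 1 := ⟨m - 1, by omega⟩
  simpa using Nat.choose_mul_succ_eq m' r




theorem newton_aux : ∀ (N : ℕ) (s : Multiset ℝ) (j : ℕ), Multiset.card s ≤ N →
    j + 2 ≤ Multiset.card s →
    ((Multiset.card s).choose (j+1) : ℝ) ^ 2 * (s.esymm j * s.esymm (j+2)) ≤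
      ((Multiset.card s).choose j : ℝ) * ((Multiset.card s).choose (j+2) : ℝ) *
        s.esymm (j+1) ^ 2 := by
  intro N
  induction N with
  | zero => intro s j hN hj; omega
  | succ N IH =>
    intro s j hN hj
    rcases eq_or_lt_of_le hj with heq | hlt
    · -- top case : j + 2 = card s
      have h1 : Multiset.card s - 1 = j + 1 := by omega
      have h2 : Multiset.card s - 2 = j := by omega
      have h3 : Multiset.card s = j + 2 := by omega
      have := newton_top s (by omega)
      rw [h1, h2] at this
      calc ((Multiset.card s).choose (j+1) : ℝ) ^ 2 * (s.esymm j * s.esymm (j+2))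
          = ((Multiset.card s).choose (j+1) : ℝ) ^ 2 *
            (s.esymm j * s.esymm (Multiset.card s)) := by rw [h3]
        _ ≤ ((Multiset.card s).choose j : ℝ) * ((Multiset.card s).choose (Multiset.card s) : ℝ) *
            s.esymm (j+1) ^ 2 := this
        _ = ((Multiset.card s).choose j : ℝ) * ((Multiset.card s).choose (j+2) : ℝ) *
            s.esymm (j+1) ^ 2 := by rw [h3]
    · -- derivative step : j + 2 < card s
      set m := Multiset.card s with hm
      have hm3 : 3 ≤ m := by omega
      set q : Polynomial ℝ := (s.map (fun a => X + C a)).prod with hq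
      have hq_monic : q.Monic :=
        monic_multiset_prod_of_monic s _ (fun a _ => monic_X_add_C a)
      have hdeg : q.natDegree = m := by
        rw [hq, natDegree_multiset_prod_of_monic]
        · rw [Multiset.map_map]
          simp [Function.comp_def, natDegree_X_add_C, hm]
        · intro f hf
          obtain ⟨a, _, rfl⟩ := Multiset.mem_map.1 hf
          exact monic_X_add_C a

      have hroots : q.roots = s.map (fun a => -a) := by
        have hq2 : q = ((s.map (fun a => -a)).map (fun a => X - C a)).prod := by
          rw [hq, Multiset.map_map]
          apply congrArg
          apply Multiset.map_congr rfl
          intro a _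
          simp [sub_neg_eq_add]
        rw [hq2, roots_multiset_prod_X_sub_C]
      have hcroots : Multiset.card q.roots = m := by rw [hroots, Multiset.card_map]
      set q' := derivative q with hq'
      have hd1 : m ≤ Multiset.card q'.roots + 1 := by
        have := Polynomial.card_roots_le_derivative q
        rw [hcroots] at this
        exact this
      have hq'degle : q'.natDegree ≤ m - 1 := by
        have := natDegree_derivative_le q
        rw [hdeg] at this
        exact this
      have hcard' : Multiset.card q'.roots ≤ q'.natDegree := card_roots' q'
      have hcroots' : Multiset.card q'.roots = m - 1 := by omega
      have hdeg' : q'.natDegree = m - 1 := by omega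
      have hsplit : Splits q' :=
        (splits_iff_card_roots).2 (by rw [hcroots', hdeg'])
      have hfac := hsplit.eq_prod_roots
      have hlc : q'.leadingCoeff = (m : ℝ) := by
        rw [Polynomial.leadingCoeff, hdeg', hq', coeff_derivative]
        rw [show m - 1 + 1 = m from by omega]
        have hcoeffm : q.coeff m = 1 := by rw [← hdeg]; exact hq_monic.coeff_natDegree
        rw [hcoeffm, one_mul]
        push_cast [Nat.cast_sub (show 1 ≤ m by omega)]
        ring
      set ν : Multiset ℝ := q'.roots.map (fun a => -a) with hν
      have hcν : Multiset.card ν = m - 1 := by rw [hν, Multiset.card_map, hcroots']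
      have hq'fac : q' = C (m : ℝ) * (ν.map (fun a => X + C a)).prod := by
        rw [hfac, hlc]
        congr 1
        rw [hν, Multiset.map_map]
        apply congrArg
        apply Multiset.map_congr rfl
        intro a _
        simp [sub_eq_add_neg]
      have hkey : ∀ r, r ≤ m - 1 → (m : ℝ) * ν.esymm r = ((m - r : ℕ) : ℝ) * s.esymm r := by
        intro r hr
        have hqc : q.coeff (m - r) = s.esymm r := by
          have := Multiset.prod_X_add_C_coeff s (show m - r ≤ Multiset.card s by omega)
          rw [← hq, ← hm] at this
          rw [this, show m - (m - r) = r from by omega]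
        have lhs1 : q'.coeff (m - 1 - r) = s.esymm r * ((m - r : ℕ) : ℝ) := by
          rw [hq', coeff_derivative, show m - 1 - r + 1 = m - r from by omega, hqc]
          congr 1
          norm_cast
          omega
        have lhs2 : q'.coeff (m - 1 - r) = (m : ℝ) * ν.esymm r := by
          rw [hq'fac, coeff_C_mul]
          congr 1
          have := Multiset.prod_X_add_C_coeff ν (show m - 1 - r ≤ Multiset.card ν by omega)
          rw [this, hcν, show m - 1 - (m - 1 - r) = r from by omega]
        rw [← lhs2, lhs1, mul_comm]
      -- apply IH to ν
      have hIH := IH ν j (by omega) (by omega)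
      rw [hcν] at hIH
      -- express things
      set M : ℝ := (m : ℝ) with hM
      have hMpos : (0:ℝ) < M := by rw [hM]; exact_mod_cast (by omega : 0 < m)
      set A : ℝ := (m.choose j : ℝ) with hA
      set B : ℝ := (m.choose (j+1) : ℝ) with hB
      set D : ℝ := (m.choose (j+2) : ℝ) with hD
      set u : ℝ := ((m - j : ℕ) : ℝ) with hu
      set v : ℝ := ((m - (j+1) : ℕ) : ℝ) with hv
      set w : ℝ := ((m - (j+2) : ℕ) : ℝ) with hw
      have hupos : (0:ℝ) < u := by rw [hu]; exact_mod_cast (by omega : 0 < m - j)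
      have hvpos : (0:ℝ) < v := by rw [hv]; exact_mod_cast (by omega : 0 < m - (j+1))
      have hwpos : (0:ℝ) < w := by rw [hw]; exact_mod_cast (by omega : 0 < m - (j+2))
      have hνj : ν.esymm j = u * s.esymm j / M := by
        rw [eq_div_iff (ne_of_gt hMpos), mul_comm (ν.esymm j) M]
        rw [hkey j (by omega)]
      have hνj1 : ν.esymm (j+1) = v * s.esymm (j+1) / M := by
        rw [eq_div_iff (ne_of_gt hMpos), mul_comm (ν.esymm (j+1)) M]
        rw [hkey (j+1) (by omega)]
      have hνj2 : ν.esymm (j+2) = w * s.esymm (j+2) / M := by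
        rw [eq_div_iff (ne_of_gt hMpos), mul_comm (ν.esymm (j+2)) M]
        rw [hkey (j+2) (by omega)]
      have hCj : ((m-1).choose j : ℝ) = A * u / M := by
        rw [eq_div_iff (ne_of_gt hMpos), hA, hu, hM]
        exact_mod_cast congrArg (Nat.cast (R := ℝ)) (choose_mul_eq m j (by omega))
      have hCj1 : ((m-1).choose (j+1) : ℝ) = B * v / M := by
        rw [eq_div_iff (ne_of_gt hMpos), hB, hv, hM]
        exact_mod_cast congrArg (Nat.cast (R := ℝ)) (choose_mul_eq m (j+1) (by omega))
      have hCj2 : ((m-1).choose (j+2) : ℝ) = D * w / M := by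
        rw [eq_div_iff (ne_of_gt hMpos), hD, hw, hM]
        exact_mod_cast congrArg (Nat.cast (R := ℝ)) (choose_mul_eq m (j+2) (by omega))
      rw [hνj, hνj1, hνj2, hCj, hCj1, hCj2] at hIH
      set K : ℝ := (u * w * v ^ 2) / M ^ 4 with hK
      have hKpos : 0 < K := by rw [hK]; positivity
      have eL : K * (B ^ 2 * (s.esymm j * s.esymm (j+2))) =
          (B * v / M) ^ 2 * (u * s.esymm j / M * (w * s.esymm (j+2) / M)) := by
        rw [hK]; field_simp
      have eR : K * (A * D * s.esymm (j+1) ^ 2) =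
          A * u / M * (D * w / M) * (v * s.esymm (j+1) / M) ^ 2 := by
        rw [hK]; field_simp
      have key2 : K * (B ^ 2 * (s.esymm j * s.esymm (j+2))) ≤
          K * (A * D * s.esymm (j+1) ^ 2) := by
        rw [eL, eR]; exact hIH
      exact le_of_mul_le_mul_left key2 hKpos



lemma chain (E : ℕ → ℝ) (K : ℕ) (hE : ∀ r, r ≤ K + 1 → 0 < E r)
    (hN : ∀ j, j + 2 ≤ K + 1 → E j * E (j+2) ≤ E (j+1) ^ 2) :
    ∀ d p, p + d = K → E (K+1) * E p ≤ E K * E (p+1) := by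
  intro d
  induction d with
  | zero => intro p hp; rw [show p = K from by omega, show K + 1 = K + 1 from rfl]
            exact le_of_eq (mul_comm _ _)
  | succ d ihd =>
    intro p hp
    have ih := ihd (p+1) (by omega)
    have hNp := hN p (by omega)
    have hp2pos := hE (p+2) (by omega)
    have hp1pos := hE (p+1) (by omega)
    have hK1pos := hE (K+1) (by omega)
    have h1 : E (K+1) * E p * E (p+2) ≤ E (K+1) * E (p+1) ^ 2 := by
      calc E (K+1) * E p * E (p+2) = E (K+1) * (E p * E (p+2)) := by ring
        _ ≤ E (K+1) * E (p+1) ^ 2 := mul_le_mul_of_nonneg_left hNp hK1pos.le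
    have h2 : E (K+1) * E (p+1) * E (p+1) ≤ E K * E (p+2) * E (p+1) :=
      mul_le_mul_of_nonneg_right ih hp1pos.le
    have h3 : E (K+1) * E p * E (p+2) ≤ E K * E (p+1) * E (p+2) := by nlinarith [h1, h2]
    exact le_of_mul_le_mul_right h3 hp2pos

lemma choose_strict (m K L : ℕ) (hL : 1 ≤ L) (hLK : L < K) (hKm : K ≤ m) :
    m.choose K * m.choose (L-1) < m.choose (K-1) * m.choose L := by
  obtain ⟨K', rfl⟩ : ∃ K', K = K' + 1 := ⟨K - 1, by omega⟩
  obtain ⟨L', rfl⟩ : ∃ L', L = L' + 1 := ⟨L - 1, by omega⟩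
  simp only [Nat.add_sub_cancel]
  have e1 : m.choose (K'+1) * (K'+1) = m.choose K' * (m - K') := Nat.choose_succ_right_eq m K'
  have e2 : m.choose (L'+1) * (L'+1) = m.choose L' * (m - L') := Nat.choose_succ_right_eq m L'
  have key : (m - K') * (L'+1) < (K'+1) * (m - L') := by
    calc (m - K') * (L'+1) ≤ (m - L') * (L'+1) := Nat.mul_le_mul_right _ (by omega)
      _ < (m - L') * (K'+1) := mul_lt_mul_of_pos_left (by omega) (by omega)
      _ = (K'+1) * (m - L') := Nat.mul_comm _ _
  have hposc : 0 < m.choose K' * m.choose L' :=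
    Nat.mul_pos (Nat.choose_pos (by omega)) (Nat.choose_pos (by omega))
  have hP : (m.choose (K'+1) * m.choose L') * ((K'+1) * (L'+1)) =
      (m.choose K' * m.choose L') * ((m - K') * (L'+1)) := by
    calc (m.choose (K'+1) * m.choose L') * ((K'+1) * (L'+1))
        = (m.choose (K'+1) * (K'+1)) * (m.choose L' * (L'+1)) := by ring
      _ = (m.choose K' * (m - K')) * (m.choose L' * (L'+1)) := by rw [e1]
      _ = (m.choose K' * m.choose L') * ((m - K') * (L'+1)) := by ring
  have hQ : (m.choose K' * m.choose (L'+1)) * ((K'+1) * (L'+1)) =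
      (m.choose K' * m.choose L') * ((K'+1) * (m - L')) := by
    calc (m.choose K' * m.choose (L'+1)) * ((K'+1) * (L'+1))
        = (m.choose (L'+1) * (L'+1)) * (m.choose K' * (K'+1)) := by ring
      _ = (m.choose L' * (m - L')) * (m.choose K' * (K'+1)) := by rw [e2]
      _ = (m.choose K' * m.choose L') * ((K'+1) * (m - L')) := by ring
  have hlt : (m.choose (K'+1) * m.choose L') * ((K'+1) * (L'+1)) <
      (m.choose K' * m.choose (L'+1)) * ((K'+1) * (L'+1)) := by
    rw [hP, hQ]
    exact mul_lt_mul_of_pos_left key hposc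
  exact Nat.lt_of_mul_lt_mul_right hlt

lemma Mstrict (s : Multiset ℝ) (K L : ℕ) (hL1 : 1 ≤ L) (hLK : L < K)
    (hKm : K ≤ Multiset.card s) (hpos : ∀ r, r ≤ K → 0 < s.esymm r) :
    s.esymm K * s.esymm (L-1) < s.esymm (K-1) * s.esymm L := by
  set m := Multiset.card s with hm
  set E : ℕ → ℝ := fun r => s.esymm r / (m.choose r : ℝ) with hE
  have hchoosepos : ∀ r, r ≤ K → (0:ℝ) < (m.choose r : ℝ) := fun r hr => by
    exact_mod_cast Nat.choose_pos (by omega)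
  have hEpos : ∀ r, r ≤ K → 0 < E r := fun r hr =>
    div_pos (hpos r hr) (hchoosepos r hr)
  obtain ⟨K', rfl⟩ : ∃ K', K = K' + 1 := ⟨K - 1, by omega⟩
  have hNE : ∀ j, j + 2 ≤ K' + 1 → E j * E (j+2) ≤ E (j+1) ^ 2 := by
    intro j hj
    have hnew := newton_aux m s j (le_refl _) (by omega)
    rw [← hm] at hnew
    have c1 := hchoosepos j (by omega)
    have c2 := hchoosepos (j+1) (by omega)
    have c3 := hchoosepos (j+2) (by omega)
    rw [hE]
    simp only
    rw [div_mul_div_comm, div_pow, div_le_div_iff₀ (by positivity) (by positivity)]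
    nlinarith [hnew]
  have hch := chain E K' (fun r hr => hEpos r hr) hNE (K' - (L-1)) (L-1) (by omega)
  have cK := hchoosepos (K'+1) (le_refl _)
  have cK1 := hchoosepos K' (by omega)
  have cL := hchoosepos L (by omega)
  have cL1 := hchoosepos (L-1) (by omega)
  have c1 : s.esymm (K'+1) = E (K'+1) * (m.choose (K'+1) : ℝ) := by
    rw [hE]; field_simp
  have c2 : s.esymm (L-1) = E (L-1) * (m.choose (L-1) : ℝ) := by
    rw [hE]; field_simp
  have c3 : s.esymm K' = E K' * (m.choose K' : ℝ) := by
    rw [hE]; field_simp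
  have c4 : s.esymm L = E L * (m.choose L : ℝ) := by
    rw [hE]; field_simp
  have hstrict : (m.choose (K'+1) : ℝ) * (m.choose (L-1) : ℝ) <
      (m.choose K' : ℝ) * (m.choose L : ℝ) := by
    have := choose_strict m (K'+1) L hL1 hLK hKm
    rw [Nat.add_sub_cancel] at this
    exact_mod_cast this
  have hposE : 0 < E K' * E L := mul_pos (hEpos K' (by omega)) (hEpos L (by omega))
  have hLL : E (K'+1) * E (L-1) ≤ E K' * E ((L-1)+1) := hch
  rw [show (L-1)+1 = L from by omega] at hLL
  have final : (E (K'+1) * E (L-1)) * ((m.choose (K'+1) : ℝ) * (m.choose (L-1) : ℝ)) <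
      (E K' * E L) * ((m.choose K' : ℝ) * (m.choose L : ℝ)) := by
    calc (E (K'+1) * E (L-1)) * ((m.choose (K'+1) : ℝ) * (m.choose (L-1) : ℝ))
        ≤ (E K' * E L) * ((m.choose (K'+1) : ℝ) * (m.choose (L-1) : ℝ)) :=
          mul_le_mul_of_nonneg_right hLL (by positivity)
      _ < (E K' * E L) * ((m.choose K' : ℝ) * (m.choose L : ℝ)) :=
          (mul_lt_mul_iff_right₀ hposE).2 hstrict
  rw [show K' + 1 - 1 = K' from by omega, c1, c2, c3, c4]
  nlinarith [final]

lemma lemA (x : ℝ) (s : Multiset ℝ) :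
    ∀ (K : ℕ), 1 ≤ K → K ≤ Multiset.card s + 1 →
    (∀ j, 1 ≤ j → j ≤ K → 0 < (x ::ₘ s).esymm j) → ∀ j, j ≤ K - 1 → 0 < s.esymm j := by
  intro K
  induction K with
  | zero => intro h; omega
  | succ K ihK =>
    intro _ hcard hq j hj
    rcases Nat.eq_zero_or_pos K with rfl | hK1
    · rw [show j = 0 from by omega, esymm_zero']; exact one_pos
    · have ih := ihK hK1 (by omega) (fun j h1 h2 => hq j h1 (by omega))
      rcases (show j ≤ K - 1 ∨ j = K from by omega) with hj' | hjK
      · exact ih j hj'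
      · -- goal : 0 < s.esymm K with K ≥ 1
        rw [hjK]
        obtain ⟨K', rfl⟩ : ∃ K', K = K' + 1 := ⟨K - 1, by omega⟩
        by_contra hneg
        push_neg at hneg
        have hs0 : 0 < s.esymm K' := ih K' (by omega)
        have hq1 : 0 < s.esymm (K'+1) + x * s.esymm K' := by
          have := hq (K'+1) (by omega) (by omega)
          rwa [esymm_cons] at this
        have hq2 : 0 < s.esymm (K'+2) + x * s.esymm (K'+1) := by
          have := hq (K'+2) (by omega) (by omega)
          rwa [esymm_cons] at this
        rcases le_or_gt x 0 with hx | hx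
        · have : x * s.esymm K' ≤ 0 := mul_nonpos_of_nonpos_of_nonneg hx hs0.le
          linarith
        · have hs2 : 0 < s.esymm (K'+2) := by
            have : x * s.esymm (K'+1) ≤ 0 := mul_nonpos_of_nonneg_of_nonpos hx.le hneg
            linarith
          have hcard2 : K' + 2 ≤ Multiset.card s := by
            by_contra hcc
            push_neg at hcc
            rw [esymm_of_lt hcc] at hs2
            exact lt_irrefl _ hs2
          have hnew := newton_aux (Multiset.card s) s K' (le_refl _) hcard2
          have hlc : ((Multiset.card s).choose K' * (Multiset.card s).choose (K'+2) : ℝ) ≤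
              ((Multiset.card s).choose (K'+1) : ℝ) ^ 2 := by
            exact_mod_cast choose_logconcave (Multiset.card s) K'
          have hBpos : (0:ℝ) < ((Multiset.card s).choose (K'+1) : ℝ) := by
            exact_mod_cast Nat.choose_pos (by omega)
          have hσσ : s.esymm K' * s.esymm (K'+2) ≤ s.esymm (K'+1) ^ 2 := by
            have hBB : (0:ℝ) < ((Multiset.card s).choose (K'+1) : ℝ) ^ 2 := by positivity
            have step : ((Multiset.card s).choose (K'+1) : ℝ) ^ 2 *
                (s.esymm K' * s.esymm (K'+2)) ≤
                ((Multiset.card s).choose (K'+1) : ℝ) ^ 2 * s.esymm (K'+1) ^ 2 := by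
              calc ((Multiset.card s).choose (K'+1) : ℝ) ^ 2 * (s.esymm K' * s.esymm (K'+2))
                  ≤ ((Multiset.card s).choose K' : ℝ) * ((Multiset.card s).choose (K'+2) : ℝ) *
                    s.esymm (K'+1) ^ 2 := hnew
                _ ≤ ((Multiset.card s).choose (K'+1) : ℝ) ^ 2 * s.esymm (K'+1) ^ 2 := by
                    have : (0:ℝ) ≤ s.esymm (K'+1) ^ 2 := sq_nonneg _
                    nlinarith [hlc, this]
            exact le_of_mul_le_mul_left step hBB
          have p1 : 0 ≤ (-(s.esymm (K'+1))) * (s.esymm (K'+1) + x * s.esymm K') :=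
            mul_nonneg (neg_nonneg.2 hneg) hq1.le
          have p2 : 0 < s.esymm K' * (s.esymm (K'+2) + x * s.esymm (K'+1)) :=
            mul_pos hs0 hq2
          nlinarith [p1, p2, hσσ]

lemma core (s : Multiset ℝ) (K L : ℕ) (hL : 1 ≤ L) (hLK : L < K)
    (hpos : ∀ j, j ≤ K - 1 → 0 < s.esymm j) :
    s.esymm K * s.esymm (L-1) < s.esymm (K-1) * s.esymm L := by
  by_cases hsK : 0 < s.esymm K
  · have hKm : K ≤ Multiset.card s := by
      by_contra h
      push_neg at h
      rw [esymm_of_lt h] at hsK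
      exact lt_irrefl _ hsK
    refine Mstrict s K L hL hLK hKm (fun r hr => ?_)
    rcases (show r ≤ K - 1 ∨ r = K from by omega) with h | rfl
    · exact hpos r h
    · exact hsK
  · push_neg at hsK
    have h1 : 0 < s.esymm (K-1) := hpos _ (le_refl _)
    have h2 : 0 < s.esymm L := hpos _ (by omega)
    have h3 : 0 < s.esymm (L-1) := hpos _ (by omega)
    have h4 : s.esymm K * s.esymm (L-1) ≤ 0 := mul_nonpos_of_nonpos_of_nonneg hsK h3.le
    nlinarith [mul_pos h1 h2]


end


lemma esymm_eq_multiset (n : ℕ) (j : ℤ) (hj : 0 ≤ j) (a : Fin n → ℝ) :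
    esymm n j a = ((Finset.univ : Finset (Fin n)).val.map a).esymm j.toNat := by
  unfold esymm
  rw [if_pos hj]
  exact (Finset.esymm_map_val a Finset.univ j.toNat).symm

lemma esymmDel_eq_multiset (n : ℕ) (j : ℤ) (hj : 0 ≤ j) (i : Fin n) (a : Fin n → ℝ) :
    esymmDel n j i a = (((Finset.univ : Finset (Fin n)).erase i).val.map a).esymm j.toNat := by
  unfold esymmDel
  rw [if_pos hj]
  exact (Finset.esymm_map_val a (Finset.univ.erase i) j.toNat).symm

lemma esymmDel_neg (n : ℕ) (j : ℤ) (hj : j < 0) (i : Fin n) (a : Fin n → ℝ) :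
    esymmDel n j i a = 0 := by
  unfold esymmDel
  rw [if_neg (by omega)]

lemma cons_rel (n : ℕ) (i : Fin n) (a : Fin n → ℝ) :
    (Finset.univ : Finset (Fin n)).val.map a =
      a i ::ₘ (((Finset.univ : Finset (Fin n)).erase i).val.map a) := by
  have h1 : ((Finset.univ : Finset (Fin n)).erase i).val =
      (Finset.univ : Finset (Fin n)).val.erase i := Finset.erase_val _ _
  have h2 : (Finset.univ : Finset (Fin n)).val =
      i ::ₘ (Finset.univ : Finset (Fin n)).val.erase i :=
    (Multiset.cons_erase (by simp : i ∈ (Finset.univ : Finset (Fin n)).val)).symm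
  rw [h1, ← Multiset.map_cons, ← h2]

lemma card_del (n : ℕ) (i : Fin n) (a : Fin n → ℝ) :
    Multiset.card (((Finset.univ : Finset (Fin n)).erase i).val.map a) = n - 1 := by
  rw [Multiset.card_map]
  have : ((Finset.univ : Finset (Fin n)).erase i).card = n - 1 := by
    rw [Finset.card_erase_of_mem (Finset.mem_univ i), Finset.card_univ, Fintype.card_fin]
  exact this


end HQE

/-- Strict ellipticity of the Hessian quotient operator on `Γ_k`:
`σ_{k-1;i}(λ)σ_l(λ) - σ_k(λ)σ_{l-1;i}(λ) > 0`, i.e. `∂(σ_k/σ_l)/∂λ_i > 0`,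
together with the auxiliary Newton-type inequality
`σ_{k-1;i}(λ)σ_{l;i}(λ) ≥ σ_{k;i}(λ)σ_{l-1;i}(λ)` for `1 ≤ l < k`. -/
theorem hessian_quotient_elliptic
    (n : ℕ) (k l : ℤ) (hl : 0 ≤ l) (hlk : l < k) (hkn : k ≤ (n : ℤ))
    (lam : Fin n → ℝ) (hlam : lam ∈ GammaK n k) :
    (∀ i : Fin n,
      0 < esymmDel n (k - 1) i lam * esymm n l lam
            - esymm n k lam * esymmDel n (l - 1) i lam) ∧
    (1 ≤ l → ∀ i : Fin n,
      esymmDel n k i lam * esymmDel n (l - 1) i lam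
        ≤ esymmDel n (k - 1) i lam * esymmDel n l i lam) := by
  have hk1 : (1:ℤ) ≤ k := by omega
  set K := k.toNat with hK
  set L := l.toNat with hLdef
  have hkK : (K:ℤ) = k := Int.toNat_of_nonneg (by omega)
  have hlL : (L:ℤ) = l := Int.toNat_of_nonneg hl
  have hKn : K ≤ n := by omega
  have hLK : L < K := by omega
  have h1K : 1 ≤ K := by omega
  -- per-index setup
  have main : ∀ i : Fin n,
      (∀ j : ℕ, j ≤ K - 1 →
        0 < (((Finset.univ : Finset (Fin n)).erase i).val.map lam).esymm j) := by
    intro i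
    set sμ := (((Finset.univ : Finset (Fin n)).erase i).val.map lam) with hsμ
    have hcs : Multiset.card sμ = n - 1 := HQE.card_del n i lam
    have hcons := HQE.cons_rel n i lam
    have hposμ : ∀ j : ℕ, 1 ≤ j → j ≤ K → 0 < (lam i ::ₘ sμ).esymm j := by
      intro j hj1 hj2
      have hje : ((j:ℤ)).toNat = j := Int.toNat_natCast j
      have := hlam (j:ℤ) (by exact_mod_cast hj1) (by omega)
      rw [HQE.esymm_eq_multiset n (j:ℤ) (by positivity) lam, hje, hcons] at this
      exact this
    exact HQE.lemA (lam i) sμ K h1K (by omega) hposμ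
  constructor
  · -- part 1
    intro i
    set sμ := (((Finset.univ : Finset (Fin n)).erase i).val.map lam) with hsμ
    have hcons := HQE.cons_rel n i lam
    have hA := main i
    have ekm1 : esymmDel n (k-1) i lam = sμ.esymm (K-1) := by
      rw [HQE.esymmDel_eq_multiset n (k-1) (by omega) i lam, show (k-1).toNat = K - 1 from by omega]
    have ek : esymm n k lam = (lam i ::ₘ sμ).esymm K := by
      rw [HQE.esymm_eq_multiset n k (by omega) lam, hcons]
    have el : esymm n l lam = (lam i ::ₘ sμ).esymm L := by
      rw [HQE.esymm_eq_multiset n l hl lam, hcons, show l.toNat = L from rfl]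
    rcases Nat.eq_zero_or_pos L with hL0 | hL1
    · -- l = 0
      have hl0 : l = 0 := by omega
      have elm1 : esymmDel n (l-1) i lam = 0 := HQE.esymmDel_neg n (l-1) (by omega) i lam
      rw [ekm1, el, elm1, hL0, HQE.esymm_zero', mul_zero, mul_one, sub_zero]
      exact hA (K-1) (le_refl _)
    · -- l ≥ 1
      have elm1 : esymmDel n (l-1) i lam = sμ.esymm (L-1) := by
        rw [HQE.esymmDel_eq_multiset n (l-1) (by omega) i lam, show (l-1).toNat = L - 1 from by omega]
      have eKc : (lam i ::ₘ sμ).esymm K = sμ.esymm K + lam i * sμ.esymm (K-1) := by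
        conv_lhs => rw [show K = (K-1)+1 from by omega]
        rw [HQE.esymm_cons, show (K-1)+1 = K from by omega]
      have eLc : (lam i ::ₘ sμ).esymm L = sμ.esymm L + lam i * sμ.esymm (L-1) := by
        conv_lhs => rw [show L = (L-1)+1 from by omega]
        rw [HQE.esymm_cons, show (L-1)+1 = L from by omega]
      have hcore := HQE.core sμ K L hL1 hLK hA
      rw [ekm1, ek, el, elm1, eKc, eLc]
      nlinarith [hcore]
  · -- part 2
    intro hl1 i
    set sμ := (((Finset.univ : Finset (Fin n)).erase i).val.map lam) with hsμ
    have hA := main i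
    have hL1 : 1 ≤ L := by omega
    have ekm1 : esymmDel n (k-1) i lam = sμ.esymm (K-1) := by
      rw [HQE.esymmDel_eq_multiset n (k-1) (by omega) i lam, show (k-1).toNat = K - 1 from by omega]
    have ek : esymmDel n k i lam = sμ.esymm K := by
      rw [HQE.esymmDel_eq_multiset n k (by omega) i lam]
    have el : esymmDel n l i lam = sμ.esymm L := by
      rw [HQE.esymmDel_eq_multiset n l hl i lam, show l.toNat = L from rfl]
    have elm1 : esymmDel n (l-1) i lam = sμ.esymm (L-1) := by
      rw [HQE.esymmDel_eq_multiset n (l-1) (by omega) i lam, show (l-1).toNat = L - 1 from by omega]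
    rw [ekm1, ek, el, elm1]
    exact le_of_lt (HQE.core sμ K L hL1 hLK hA)
end
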